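/- arXiv:2104.01143 — 8 statements merged into one kernel-verified Lean document; each statement's English description precedes it below -/
import Mathlib

section
/- Suppose there exist u₀ > 0 and v₀ > 0 with (b₁, b₂) = u₀·(1, 0) + v₀·(cos Ω, sin Ω). Then there exists exactly one admissible curve (L, φ) that is the concatenation of one circular arc and one line segment, i.e. for which there exist R > 0 and d ≥ 0 with L = R·Ω + d and either φ(s) = min(s, R·Ω)/R for all s ∈ [0, L] (an arc of radius R and angle Ω followed by a segment of length d), or φ(s) = max(s − d, 0)/R for all s ∈ [0, L] (a segment of length d followed by an arc of radius R and angle Ω). For this unique curve: d > 0 with the arc at the A-end if u₀ < v₀; d > 0 with the arc at the B-end if u₀ > v₀; and d = 0 (the curve is a single arc of angle Ω) if u₀ = v₀. Its maximal curvature equals 1/R, and the radius R =: R_a is uniquely determined by Ω, u₀ and v₀. -/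
open Real

/-- `φ` is `K`-Lipschitz on `[0, L]`. -/
def LipOn (φ : ℝ → ℝ) (L K : ℝ) : Prop :=
  ∀ s ∈ Set.Icc (0:ℝ) L, ∀ t ∈ Set.Icc (0:ℝ) L, |φ s - φ t| ≤ K * |s - t|

/-- The maximal curvature of the curve `(L, φ)`: the least Lipschitz constant of `φ`
(essential supremum of `φ'`) on `[0, L]`. -/
noncomputable def maxCurv (φ : ℝ → ℝ) (L : ℝ) : ℝ :=
  sInf {K : ℝ | 0 ≤ K ∧ LipOn φ L K}

/-- An admissible curve for the data `(Ω, b₁, b₂)` : a pair `(L, φ)` with `L > 0`,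
`φ` nondecreasing and Lipschitz on `[0, L]`, `φ 0 = 0`, `φ L = Ω`,
`∫₀^L cos (φ s) ds = b₁` and `∫₀^L sin (φ s) ds = b₂`. -/
def Admissible (Ω b₁ b₂ L : ℝ) (φ : ℝ → ℝ) : Prop :=
  0 < L ∧ MonotoneOn φ (Set.Icc 0 L) ∧ (∃ K : ℝ, 0 ≤ K ∧ LipOn φ L K) ∧
  φ 0 = 0 ∧ φ L = Ω ∧
  (∫ s in (0:ℝ)..L, Real.cos (φ s)) = b₁ ∧
  (∫ s in (0:ℝ)..L, Real.sin (φ s)) = b₂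

/-- First coordinate of the associated plane curve. -/
noncomputable def xcoord (φ : ℝ → ℝ) (s : ℝ) : ℝ := ∫ t in (0:ℝ)..s, Real.cos (φ t)

/-- Second coordinate of the associated plane curve. -/
noncomputable def ycoord (φ : ℝ → ℝ) (s : ℝ) : ℝ := ∫ t in (0:ℝ)..s, Real.sin (φ t)

/-- The curve `(L, φ)` is an arc of radius `R` and angle `Ω` followed by a
line segment of length `d` (arc at the `A`-end). -/
def ArcThenSeg (Ω R d L : ℝ) (φ : ℝ → ℝ) : Prop :=
  L = R * Ω + d ∧ ∀ s ∈ Set.Icc (0:ℝ) L, φ s = min s (R * Ω) / R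

/-- The curve `(L, φ)` is a line segment of length `d` followed by an arc of
radius `R` and angle `Ω` (arc at the `B`-end). -/
def SegThenArc (Ω R d L : ℝ) (φ : ℝ → ℝ) : Prop :=
  L = R * Ω + d ∧ ∀ s ∈ Set.Icc (0:ℝ) L, φ s = max (s - d) 0 / R

/-- The curve `(L, φ)` is the concatenation of one circular arc (radius `R`, angle `Ω`)
and one line segment (length `d`), in either order. -/
def ArcSeg (Ω R d L : ℝ) (φ : ℝ → ℝ) : Prop :=
  ArcThenSeg Ω R d L φ ∨ SegThenArc Ω R d L φ

-- helper lemmas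

lemma min_lip (a b c : ℝ) : |min a c - min b c| ≤ |a - b| := by
  have h1 := le_abs_self (a - b); have h2 := neg_abs_le (a - b)
  rcases le_total a c with h|h <;> rcases le_total b c with h'|h'
  · rw [min_eq_left h, min_eq_left h']
  · rw [min_eq_left h, min_eq_right h', abs_le]; exact ⟨by linarith, by linarith⟩
  · rw [min_eq_right h, min_eq_left h', abs_le]; exact ⟨by linarith, by linarith⟩
  · rw [min_eq_right h, min_eq_right h', abs_le]; exact ⟨by linarith, by linarith⟩

lemma max_lip (a b : ℝ) : |max a 0 - max b 0| ≤ |a - b| := by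
  have h1 := le_abs_self (a - b); have h2 := neg_abs_le (a - b)
  rcases le_total a 0 with h|h <;> rcases le_total b 0 with h'|h'
  · rw [max_eq_right h, max_eq_right h']; simpa using abs_nonneg (a-b)
  · rw [max_eq_right h, max_eq_left h', abs_le]; exact ⟨by linarith, by linarith⟩
  · rw [max_eq_left h, max_eq_right h', abs_le]; exact ⟨by linarith, by linarith⟩
  · rw [max_eq_left h, max_eq_left h', abs_le]; exact ⟨by linarith, by linarith⟩

lemma lipA {R : ℝ} (hR : 0 < R) (A L : ℝ) :
    LipOn (fun x => min x A / R) L (1/R) := by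
  intro s _ t _
  have := min_lip s t A
  rw [div_sub_div_same, abs_div, abs_of_pos hR, one_div, inv_mul_eq_div]
  gcongr

lemma lipB {R : ℝ} (hR : 0 < R) (d L : ℝ) :
    LipOn (fun x => max (x - d) 0 / R) L (1/R) := by
  intro s _ t _
  have h := max_lip (s - d) (t - d)
  have h2 : s - d - (t - d) = s - t := by ring
  rw [h2] at h
  rw [div_sub_div_same, abs_div, abs_of_pos hR, one_div, inv_mul_eq_div]
  gcongr

-- integrals
lemma base_cos {R : ℝ} (hR : 0 < R) (Ω : ℝ) :
    (∫ x in (0:ℝ)..(R*Ω), Real.cos (x / R)) = R * Real.sin Ω := by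
  rw [intervalIntegral.integral_comp_div (fun x => Real.cos x) hR.ne']
  rw [integral_cos, zero_div, mul_div_cancel_left₀ _ hR.ne']
  simp [smul_eq_mul]

lemma base_sin {R : ℝ} (hR : 0 < R) (Ω : ℝ) :
    (∫ x in (0:ℝ)..(R*Ω), Real.sin (x / R)) = R * (1 - Real.cos Ω) := by
  rw [intervalIntegral.integral_comp_div (fun x => Real.sin x) hR.ne']
  rw [integral_sin, zero_div, mul_div_cancel_left₀ _ hR.ne']
  simp [smul_eq_mul]

lemma contA (A R : ℝ) : Continuous fun x : ℝ => min x A / R :=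
  (continuous_id.min continuous_const).div_const R

lemma contB (d R : ℝ) : Continuous fun x : ℝ => max (x - d) 0 / R :=
  (((continuous_id.sub continuous_const).max continuous_const)).div_const R

lemma intArc (g : ℝ → ℝ) (hg : Continuous g) {R Ω d : ℝ} (hR : 0 < R) (hΩ : 0 ≤ Ω) (hd : 0 ≤ d) :
    (∫ x in (0:ℝ)..(R*Ω+d), g (min x (R*Ω) / R))
      = (∫ x in (0:ℝ)..(R*Ω), g (x / R)) + d * g Ω := by
  have hA : (0:ℝ) ≤ R*Ω := mul_nonneg hR.le hΩ
  have hcont : Continuous fun x : ℝ => g (min x (R*Ω) / R) := hg.comp (contA _ _)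
  rw [← intervalIntegral.integral_add_adjacent_intervals (b := R*Ω)
    (hcont.intervalIntegrable _ _) (hcont.intervalIntegrable _ _)]
  have h1 : (∫ x in (0:ℝ)..(R*Ω), g (min x (R*Ω)/R)) = ∫ x in (0:ℝ)..(R*Ω), g (x/R) := by
    apply intervalIntegral.integral_congr
    intro x hx
    rw [Set.uIcc_of_le hA] at hx
    obtain ⟨hx1, hx2⟩ := hx
    simp only
    rw [min_eq_left hx2]
  have h2 : (∫ x in (R*Ω)..(R*Ω+d), g (min x (R*Ω)/R)) = d * g Ω := by
    have : (∫ x in (R*Ω)..(R*Ω+d), g (min x (R*Ω)/R))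
        = ∫ _x in (R*Ω)..(R*Ω+d), g Ω := by
      apply intervalIntegral.integral_congr
      intro x hx
      rw [Set.uIcc_of_le (by linarith)] at hx
      obtain ⟨hx1, hx2⟩ := hx
      simp only
      rw [min_eq_right hx1, mul_div_cancel_left₀ _ hR.ne']
    rw [this, intervalIntegral.integral_const, smul_eq_mul]
    ring_nf
  rw [h1, h2]

lemma intSeg (g : ℝ → ℝ) (hg : Continuous g) {R Ω d : ℝ} (hR : 0 < R) (hΩ : 0 ≤ Ω) (hd : 0 ≤ d) :
    (∫ x in (0:ℝ)..(R*Ω+d), g (max (x - d) 0 / R))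
      = d * g 0 + (∫ x in (0:ℝ)..(R*Ω), g (x / R)) := by
  have hA : (0:ℝ) ≤ R*Ω := mul_nonneg hR.le hΩ
  have hcont : Continuous fun x : ℝ => g (max (x-d) 0 / R) := hg.comp (contB _ _)
  rw [← intervalIntegral.integral_add_adjacent_intervals (b := d)
    (hcont.intervalIntegrable _ _) (hcont.intervalIntegrable _ _)]
  have h1 : (∫ x in (0:ℝ)..d, g (max (x-d) 0/R)) = d * g 0 := by
    have : (∫ x in (0:ℝ)..d, g (max (x-d) 0/R)) = ∫ _x in (0:ℝ)..d, g 0 := by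
      apply intervalIntegral.integral_congr
      intro x hx
      rw [Set.uIcc_of_le hd] at hx
      obtain ⟨hx1, hx2⟩ := hx
      simp only
      rw [max_eq_right (by linarith), zero_div]
    rw [this, intervalIntegral.integral_const, smul_eq_mul]
    ring_nf
  have h2 : (∫ x in d..(R*Ω+d), g (max (x-d) 0/R)) = ∫ x in (0:ℝ)..(R*Ω), g (x/R) := by
    have e1 : (∫ x in d..(R*Ω+d), g (max (x-d) 0/R)) = ∫ x in d..(R*Ω+d), g ((x-d)/R) := by
      apply intervalIntegral.integral_congr
      intro x hx
      rw [Set.uIcc_of_le (by linarith)] at hx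
      obtain ⟨hx1, hx2⟩ := hx
      simp only
      rw [max_eq_left (by linarith)]
    rw [e1]
    have := intervalIntegral.integral_comp_sub_right (a := d) (b := R*Ω+d)
      (fun x => g (x / R)) d
    simpa using this
  rw [h1, h2]

-- algebra
lemma solve_arc {s c R d u v : ℝ} (hs : s ≠ 0) (hc : c ≠ 0) (h1 : s^2 + c^2 = 1)
    (E1 : R * (2*s*c) + d * (1 - 2*s^2) = u + v * (1 - 2*s^2))
    (E2 : R * (1 - (1 - 2*s^2)) + d * (2*s*c) = v * (2*s*c)) :
    R = u * c / s ∧ d = v - u := by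
  have e2 : R*s + d*c = v*c := by
    have h : (2*s) * (R*s + d*c) = (2*s) * (v*c) := by linear_combination E2
    exact mul_left_cancel₀ (by simpa using hs) h
  have hRs : R * s = u * c := by linear_combination c*E1 - (1-2*s^2)*e2 - 2*R*s*h1
  constructor
  · rw [eq_div_iff hs]; exact hRs
  · have h : d * c = (v-u) * c := by linear_combination e2 - hRs
    exact mul_right_cancel₀ hc h

lemma solve_seg {s c R d u v : ℝ} (hs : s ≠ 0) (hc : c ≠ 0) (h1 : s^2 + c^2 = 1)
    (E1 : d + R * (2*s*c) = u + v * (1 - 2*s^2))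
    (E2 : R * (1 - (1 - 2*s^2)) = v * (2*s*c)) :
    R = v * c / s ∧ d = u - v := by
  have hRs : R * s = v * c := by
    have h : (2*s) * (R*s) = (2*s) * (v*c) := by linear_combination E2
    exact mul_left_cancel₀ (by simpa using hs) h
  constructor
  · rw [eq_div_iff hs]; exact hRs
  · linear_combination E1 - 2*c*hRs - 2*v*h1

-- maxCurv
lemma maxCurv_eq_of (φ : ℝ → ℝ) (L R : ℝ) (hR : 0 < R)
    (hlip : LipOn φ L (1/R))
    (s t : ℝ) (hs : s ∈ Set.Icc 0 L) (ht : t ∈ Set.Icc 0 L)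
    (hts : t < s) (hval : φ s - φ t = (s - t)/R) :
    maxCurv φ L = 1/R := by
  apply le_antisymm
  · exact csInf_le ⟨0, fun K hK => hK.1⟩ (show (0:ℝ) ≤ 1/R ∧ _ from ⟨by positivity, hlip⟩)
  · refine le_csInf ⟨1/R, show (0:ℝ) ≤ 1/R ∧ _ from ⟨by positivity, hlip⟩⟩ ?_
    rintro K ⟨hK0, hK⟩
    have h := hK s hs t ht
    have hst : 0 < s - t := sub_pos.2 hts
    rw [hval, abs_of_pos (by positivity), abs_of_pos hst, div_le_iff₀ hR] at h
    rw [div_le_iff₀ hR]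
    nlinarith

lemma adm_arc {Ω R d : ℝ} (hΩ0 : 0 < Ω) (hR : 0 < R) (hd : 0 ≤ d) :
    (0 < R*Ω+d ∧ MonotoneOn (fun x => min x (R*Ω)/R) (Set.Icc 0 (R*Ω+d)) ∧
      (∃ K : ℝ, 0 ≤ K ∧ LipOn (fun x => min x (R*Ω)/R) (R*Ω+d) K) ∧
      (fun x => min x (R*Ω)/R) 0 = 0 ∧ (fun x => min x (R*Ω)/R) (R*Ω+d) = Ω ∧
      (∫ x in (0:ℝ)..(R*Ω+d), Real.cos (min x (R*Ω)/R)) = R*Real.sin Ω + d*Real.cos Ω ∧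
      (∫ x in (0:ℝ)..(R*Ω+d), Real.sin (min x (R*Ω)/R)) = R*(1-Real.cos Ω) + d*Real.sin Ω) := by
  have hA : 0 < R*Ω := mul_pos hR hΩ0
  refine ⟨by linarith, ?_, ⟨1/R, by positivity, lipA hR _ _⟩, ?_, ?_, ?_, ?_⟩
  · intro a _ b _ hab; simp only; gcongr
  · simp only; rw [min_eq_left hA.le, zero_div]
  · simp only; rw [min_eq_right (by linarith : R*Ω ≤ R*Ω+d), mul_div_cancel_left₀ _ hR.ne']
  · rw [intArc _ Real.continuous_cos hR hΩ0.le hd, base_cos hR]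
  · rw [intArc _ Real.continuous_sin hR hΩ0.le hd, base_sin hR]

lemma adm_seg {Ω R d : ℝ} (hΩ0 : 0 < Ω) (hR : 0 < R) (hd : 0 ≤ d) :
    (0 < R*Ω+d ∧ MonotoneOn (fun x => max (x-d) 0/R) (Set.Icc 0 (R*Ω+d)) ∧
      (∃ K : ℝ, 0 ≤ K ∧ LipOn (fun x => max (x-d) 0/R) (R*Ω+d) K) ∧
      (fun x => max (x-d) 0/R) 0 = 0 ∧ (fun x => max (x-d) 0/R) (R*Ω+d) = Ω ∧
      (∫ x in (0:ℝ)..(R*Ω+d), Real.cos (max (x-d) 0/R)) = d + R*Real.sin Ω ∧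
      (∫ x in (0:ℝ)..(R*Ω+d), Real.sin (max (x-d) 0/R)) = R*(1-Real.cos Ω)) := by
  have hA : 0 < R*Ω := mul_pos hR hΩ0
  refine ⟨by linarith, ?_, ⟨1/R, by positivity, lipB hR _ _⟩, ?_, ?_, ?_, ?_⟩
  · intro a _ b _ hab; simp only; gcongr
  · simp only; rw [max_eq_right (by linarith : (0:ℝ)-d ≤ 0), zero_div]
  · simp only
    rw [show R*Ω+d-d = R*Ω by ring, max_eq_left hA.le, mul_div_cancel_left₀ _ hR.ne']
  · rw [intSeg _ Real.continuous_cos hR hΩ0.le hd, base_cos hR]; simp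
  · rw [intSeg _ Real.continuous_sin hR hΩ0.le hd, base_sin hR]; simp

lemma eq_arc {Ω b₁ b₂ R d L : ℝ} {φ : ℝ → ℝ} (hΩ0 : 0 ≤ Ω) (hR : 0 < R) (hd : 0 ≤ d)
    (hadm : Admissible Ω b₁ b₂ L φ) (h : ArcThenSeg Ω R d L φ) :
    b₁ = R * Real.sin Ω + d * Real.cos Ω ∧ b₂ = R*(1 - Real.cos Ω) + d * Real.sin Ω := by
  obtain ⟨hL, hφ⟩ := h
  have hA : 0 ≤ R*Ω := mul_nonneg hR.le hΩ0
  have hL0 : 0 ≤ L := by rw [hL]; linarith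
  have key : ∀ g : ℝ → ℝ, (∫ x in (0:ℝ)..L, g (φ x)) = ∫ x in (0:ℝ)..L, g (min x (R*Ω)/R) := by
    intro g; apply intervalIntegral.integral_congr; intro x hx
    rw [Set.uIcc_of_le hL0] at hx; simp only; rw [hφ x hx]
  obtain ⟨-,-,-,-,-,hb1, hb2⟩ := hadm
  constructor
  · rw [← hb1, key Real.cos, hL, intArc _ Real.continuous_cos hR hΩ0 hd, base_cos hR]
  · rw [← hb2, key Real.sin, hL, intArc _ Real.continuous_sin hR hΩ0 hd, base_sin hR]

lemma eq_seg {Ω b₁ b₂ R d L : ℝ} {φ : ℝ → ℝ} (hΩ0 : 0 ≤ Ω) (hR : 0 < R) (hd : 0 ≤ d)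
    (hadm : Admissible Ω b₁ b₂ L φ) (h : SegThenArc Ω R d L φ) :
    b₁ = d + R * Real.sin Ω ∧ b₂ = R*(1 - Real.cos Ω) := by
  obtain ⟨hL, hφ⟩ := h
  have hA : 0 ≤ R*Ω := mul_nonneg hR.le hΩ0
  have hL0 : 0 ≤ L := by rw [hL]; linarith
  have key : ∀ g : ℝ → ℝ, (∫ x in (0:ℝ)..L, g (φ x)) = ∫ x in (0:ℝ)..L, g (max (x-d) 0/R) := by
    intro g; apply intervalIntegral.integral_congr; intro x hx
    rw [Set.uIcc_of_le hL0] at hx; simp only; rw [hφ x hx]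
  obtain ⟨-,-,-,-,-,hb1, hb2⟩ := hadm
  constructor
  · rw [← hb1, key Real.cos, hL, intSeg _ Real.continuous_cos hR hΩ0 hd, base_cos hR]; simp
  · rw [← hb2, key Real.sin, hL, intSeg _ Real.continuous_sin hR hΩ0 hd, base_sin hR]; simp

/-- There is exactly one admissible curve that is the concatenation of one circular arc
and one line segment; the arc is at the `A`-end if `u₀ < v₀`, at the `B`-end if
`u₀ > v₀`, and the curve is a single arc (`d = 0`) if `u₀ = v₀`; its maximal curvature
is `1/R`, and the radius `R = R_a` is uniquely determined. -/
theorem stmt0 (Ω b₁ b₂ u₀ v₀ : ℝ)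
    (hΩ : Ω ∈ Set.Ioo 0 Real.pi) (hu : 0 < u₀) (hv : 0 < v₀)
    (hb₁ : b₁ = u₀ + v₀ * Real.cos Ω) (hb₂ : b₂ = v₀ * Real.sin Ω) :
    ∃ R d L : ℝ, ∃ φ : ℝ → ℝ, 0 < R ∧ 0 ≤ d ∧
      Admissible Ω b₁ b₂ L φ ∧ ArcSeg Ω R d L φ ∧
      (∀ R' d' L' : ℝ, ∀ φ' : ℝ → ℝ, 0 < R' → 0 ≤ d' →
        Admissible Ω b₁ b₂ L' φ' → ArcSeg Ω R' d' L' φ' →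
        R' = R ∧ d' = d ∧ L' = L ∧ ∀ s ∈ Set.Icc (0:ℝ) L, φ' s = φ s) ∧
      (u₀ < v₀ → 0 < d ∧ ArcThenSeg Ω R d L φ) ∧
      (v₀ < u₀ → 0 < d ∧ SegThenArc Ω R d L φ) ∧
      (u₀ = v₀ → d = 0) ∧
      maxCurv φ L = 1 / R := by
  obtain ⟨hΩ0, hΩπ⟩ := hΩ
  have hπ := Real.pi_pos
  set S := Real.sin (Ω/2) with hS
  set C := Real.cos (Ω/2) with hC
  have hs2 : 0 < S := Real.sin_pos_of_pos_of_lt_pi (by linarith) (by linarith)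
  have hc2 : 0 < C := Real.cos_pos_of_mem_Ioo ⟨by linarith, by linarith⟩
  have hpyth : S^2 + C^2 = 1 := Real.sin_sq_add_cos_sq _
  have hsinΩ : Real.sin Ω = 2*S*C := by
    have h := Real.sin_two_mul (Ω/2)
    rw [show 2*(Ω/2) = Ω by ring] at h
    rw [hS, hC]; exact h
  have hcosΩ : Real.cos Ω = 1 - 2*S^2 := by
    have h := Real.cos_two_mul (Ω/2)
    rw [show 2*(Ω/2) = Ω by ring] at h
    have hp' := hpyth
    rw [hS, hC] at hp'
    rw [hS]; linarith
  rcases le_total u₀ v₀ with hle | hle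
  · -- arc then segment
    obtain ⟨R, hRs⟩ : ∃ R : ℝ, R * S = u₀ * C := ⟨u₀*C/S, by field_simp⟩
    have hRdef : R = u₀*C/S := (eq_div_iff hs2.ne').mpr hRs
    have hR : 0 < R := by rw [hRdef]; positivity
    have hA : 0 < R*Ω := mul_pos hR hΩ0
    have hd : (0:ℝ) ≤ v₀ - u₀ := by linarith
    refine ⟨R, v₀-u₀, R*Ω+(v₀-u₀), fun x => min x (R*Ω)/R, hR, hd, ?_, ?_, ?_, ?_, ?_, ?_, ?_⟩
    · have h := adm_arc hΩ0 hR hd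
      have e1 : R*Real.sin Ω + (v₀-u₀)*Real.cos Ω = b₁ := by
        rw [hb₁, hsinΩ, hcosΩ]; linear_combination 2*C*hRs + 2*u₀*hpyth
      have e2 : R*(1-Real.cos Ω) + (v₀-u₀)*Real.sin Ω = b₂ := by
        rw [hb₂, hsinΩ, hcosΩ]; linear_combination 2*S*hRs
      rw [e1, e2] at h; exact h
    · exact Or.inl ⟨rfl, fun s _ => rfl⟩
    · intro R' d' L' φ' hR' hd' hadm' harc'
      rcases harc' with h | h
      · obtain ⟨hE1, hE2⟩ := eq_arc hΩ0.le hR' hd' hadm' h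
        rw [hb₁, hsinΩ, hcosΩ] at hE1; rw [hb₂, hsinΩ, hcosΩ] at hE2
        obtain ⟨hR'eq, hd'eq⟩ := solve_arc (R:=R') (d:=d') (u:=u₀) (v:=v₀) hs2.ne' hc2.ne' hpyth
          (by linear_combination -hE1) (by linear_combination -hE2)
        have hRR : R' = R := by rw [hR'eq, ← hRdef]
        have hLL : L' = R*Ω+(v₀-u₀) := by rw [h.1, hRR, hd'eq]
        refine ⟨hRR, hd'eq, hLL, ?_⟩
        intro x hx
        have hx' : x ∈ Set.Icc 0 L' := hLL ▸ hx
        rw [h.2 x hx', hRR]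
      · obtain ⟨hE1, hE2⟩ := eq_seg hΩ0.le hR' hd' hadm' h
        rw [hb₁, hsinΩ, hcosΩ] at hE1; rw [hb₂, hsinΩ, hcosΩ] at hE2
        obtain ⟨hR'eq, hd'eq⟩ := solve_seg (R:=R') (d:=d') (u:=u₀) (v:=v₀) hs2.ne' hc2.ne' hpyth
          (by linear_combination -hE1) (by linear_combination -hE2)
        have huv : u₀ = v₀ := le_antisymm hle (by linarith [hd'eq ▸ hd'])
        have hd'0 : d' = 0 := by rw [hd'eq, huv]; ring
        have hRR : R' = R := by rw [hR'eq, ← huv, ← hRdef]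
        have hLL : L' = R*Ω+(v₀-u₀) := by rw [h.1, hRR, hd'0, huv]; ring
        refine ⟨hRR, by rw [hd'0, huv]; ring, hLL, ?_⟩
        intro x hx
        have hx' : x ∈ Set.Icc 0 L' := hLL ▸ hx
        have hx2 : x ≤ R*Ω := by have := hx.2; rw [huv] at this; linarith
        rw [h.2 x hx', hd'0, hRR, sub_zero, max_eq_left hx.1]
        simp only
        rw [min_eq_left hx2]
    · intro hlt; exact ⟨by linarith, rfl, fun s _ => rfl⟩
    · intro hlt; exact absurd hlt (not_lt.2 hle)
    · intro heq; linarith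
    · refine maxCurv_eq_of _ _ R hR (lipA hR _ _) (R*Ω) 0
        ⟨hA.le, by linarith⟩ ⟨le_rfl, by linarith⟩ hA ?_
      rw [min_self, min_eq_left (le_refl (0:ℝ) |>.trans hA.le), zero_div, sub_zero, sub_zero]
  · -- segment then arc
    obtain ⟨R, hRs⟩ : ∃ R : ℝ, R * S = v₀ * C := ⟨v₀*C/S, by field_simp⟩
    have hRdef : R = v₀*C/S := (eq_div_iff hs2.ne').mpr hRs
    have hR : 0 < R := by rw [hRdef]; positivity
    have hA : 0 < R*Ω := mul_pos hR hΩ0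
    have hd : (0:ℝ) ≤ u₀ - v₀ := by linarith
    refine ⟨R, u₀-v₀, R*Ω+(u₀-v₀), fun x => max (x-(u₀-v₀)) 0/R, hR, hd, ?_, ?_, ?_, ?_, ?_, ?_, ?_⟩
    · have h := adm_seg hΩ0 hR hd
      have e1 : (u₀-v₀) + R*Real.sin Ω = b₁ := by
        rw [hb₁, hsinΩ, hcosΩ]; linear_combination 2*C*hRs + 2*v₀*hpyth
      have e2 : R*(1-Real.cos Ω) = b₂ := by
        rw [hb₂, hsinΩ, hcosΩ]; linear_combination 2*S*hRs
      rw [e1, e2] at h; exact h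
    · exact Or.inr ⟨rfl, fun s _ => rfl⟩
    · intro R' d' L' φ' hR' hd' hadm' harc'
      rcases harc' with h | h
      · obtain ⟨hE1, hE2⟩ := eq_arc hΩ0.le hR' hd' hadm' h
        rw [hb₁, hsinΩ, hcosΩ] at hE1; rw [hb₂, hsinΩ, hcosΩ] at hE2
        obtain ⟨hR'eq, hd'eq⟩ := solve_arc (R:=R') (d:=d') (u:=u₀) (v:=v₀) hs2.ne' hc2.ne' hpyth
          (by linear_combination -hE1) (by linear_combination -hE2)
        have huv : u₀ = v₀ := le_antisymm (by linarith [hd'eq ▸ hd']) hle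
        have hd'0 : d' = 0 := by rw [hd'eq, huv]; ring
        have hRR : R' = R := by rw [hR'eq, huv, ← hRdef]
        have hLL : L' = R*Ω+(u₀-v₀) := by rw [h.1, hRR, hd'0, huv]; ring
        refine ⟨hRR, by rw [hd'0, huv]; ring, hLL, ?_⟩
        intro x hx
        have hx' : x ∈ Set.Icc 0 L' := hLL ▸ hx
        have hx2 : x ≤ R*Ω := by have := hx.2; rw [huv] at this; linarith
        rw [h.2 x hx', hRR]
        simp only
        rw [min_eq_left hx2, show x-(u₀-v₀) = x - 0 by rw [huv]; ring, sub_zero,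
          max_eq_left hx.1]
      · obtain ⟨hE1, hE2⟩ := eq_seg hΩ0.le hR' hd' hadm' h
        rw [hb₁, hsinΩ, hcosΩ] at hE1; rw [hb₂, hsinΩ, hcosΩ] at hE2
        obtain ⟨hR'eq, hd'eq⟩ := solve_seg (R:=R') (d:=d') (u:=u₀) (v:=v₀) hs2.ne' hc2.ne' hpyth
          (by linear_combination -hE1) (by linear_combination -hE2)
        have hRR : R' = R := by rw [hR'eq, ← hRdef]
        have hLL : L' = R*Ω+(u₀-v₀) := by rw [h.1, hRR, hd'eq]
        refine ⟨hRR, hd'eq, hLL, ?_⟩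
        intro x hx
        have hx' : x ∈ Set.Icc 0 L' := hLL ▸ hx
        rw [h.2 x hx', hRR, hd'eq]
    · intro hlt; exact absurd hlt (not_lt.2 hle)
    · intro hlt; exact ⟨by linarith, rfl, fun s _ => rfl⟩
    · intro heq; linarith
    · refine maxCurv_eq_of _ _ R hR (lipB hR _ _) (R*Ω+(u₀-v₀)) (u₀-v₀)
        ⟨by linarith, le_rfl⟩ ⟨hd, by linarith⟩ (by linarith) ?_
      rw [show R*Ω+(u₀-v₀)-(u₀-v₀) = R*Ω by ring, max_eq_left hA.le, sub_self,
        max_eq_right (le_refl (0:ℝ)), zero_div, sub_zero]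
end

section
/- Suppose there exist u₀ > 0 and v₀ > 0 with (b₁, b₂) = u₀·(1, 0) + v₀·(cos Ω, sin Ω), and let (L_J, φ_J) be the unique admissible curve that is the concatenation of one circular arc (of some radius R_a > 0 and angle Ω) and one line segment. Then every admissible curve has maximal curvature ≥ 1/R_a; consequently the infimum over all admissible curves of the maximal curvature is attained, equals 1/R_a, and is attained by (L_J, φ_J). -/
open Real MeasureTheory intervalIntegral

lemma sin_lip (x y : ℝ) : |Real.sin x - Real.sin y| ≤ |x - y| := by
  rw [Real.sin_sub_sin]
  calc |2 * Real.sin ((x - y) / 2) * Real.cos ((x + y) / 2)|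
      = 2 * |Real.sin ((x - y) / 2)| * |Real.cos ((x + y) / 2)| := by
        rw [abs_mul, abs_mul]; norm_num
    _ ≤ 2 * |(x - y) / 2| * 1 := by
        have h1 := Real.abs_sin_le_abs (x := (x - y) / 2)
        have h2 := Real.abs_cos_le_one ((x + y) / 2)
        have h3 : (0:ℝ) ≤ 2 * |(x - y) / 2| := by positivity
        nlinarith [abs_nonneg (Real.sin ((x - y) / 2)), abs_nonneg (Real.cos ((x + y) / 2))]
    _ = |x - y| := by rw [abs_div, abs_two]; ring

lemma LipOn.continuousOn {φ : ℝ → ℝ} {L K : ℝ} (h : LipOn φ L K) :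
    ContinuousOn φ (Set.Icc 0 L) := by
  have h2 : LipschitzOnWith (Real.toNNReal K) φ (Set.Icc 0 L) := by
    rw [lipschitzOnWith_iff_dist_le_mul]
    intro x hx y hy
    rw [Real.dist_eq, Real.dist_eq]
    calc |φ x - φ y| ≤ K * |x - y| := h x hx y hy
      _ ≤ Real.toNNReal K * |x - y| := by gcongr; exact Real.le_coe_toNNReal K
  exact h2.continuousOn

lemma core_ineq {Ω L K : ℝ} {φ : ℝ → ℝ} (hΩ0 : 0 < Ω) (hΩπ : Ω < Real.pi)
    (hL : 0 < L) (hmono : MonotoneOn φ (Set.Icc 0 L)) (hK : 0 ≤ K)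
    (hlip : LipOn φ L K) (h0 : φ 0 = 0) (hΩL : φ L = Ω) :
    1 - Real.cos Ω ≤ K * ∫ s in (0:ℝ)..L, Real.sin (φ s) := by
  have hcont : ContinuousOn (fun u => Real.sin (φ u)) (Set.Icc 0 L) :=
    Real.continuous_sin.comp_continuousOn hlip.continuousOn
  have hInt : ∀ a b : ℝ, a ∈ Set.Icc (0:ℝ) L → b ∈ Set.Icc (0:ℝ) L →
      IntervalIntegrable (fun u => Real.sin (φ u)) MeasureTheory.volume a b := by
    intro a b ha hb
    apply (hcont.mono ?_).intervalIntegrable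
    rw [← Set.uIcc_of_le hL.le] at ha hb ⊢
    exact Set.uIcc_subset_uIcc ha hb
  have key : ∀ n : ℕ, 0 < n →
      1 - Real.cos Ω ≤ K * (∫ s in (0:ℝ)..L, Real.sin (φ s)) + n * (3/2 * K^2 * (L/n)^2) := by
    intro n hn
    set Δ := L / n with hΔdef
    have hnR : (0:ℝ) < n := Nat.cast_pos.2 hn
    have hΔ : 0 < Δ := div_pos hL hnR
    set s : ℕ → ℝ := fun i => i * Δ with hsdef
    have hstep : ∀ i : ℕ, s (i+1) - s i = Δ := by
      intro i; simp only [hsdef]; push_cast; ring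
    have hs0 : s 0 = 0 := by simp [hsdef]
    have hsn : s n = L := by
      simp only [hsdef, hΔdef]; field_simp
    have hs_mem : ∀ i : ℕ, i ≤ n → s i ∈ Set.Icc (0:ℝ) L := by
      intro i hi
      refine ⟨by positivity, ?_⟩
      have h1 : (i:ℝ) ≤ n := Nat.cast_le.2 hi
      calc (i:ℝ) * Δ ≤ n * Δ := by gcongr
        _ = L := by rw [hΔdef]; field_simp
    have hper : ∀ i ∈ Finset.range n,
        Real.cos (φ (s i)) - Real.cos (φ (s (i+1))) ≤
          K * (∫ u in s i..s (i+1), Real.sin (φ u)) + 3/2 * K^2 * Δ^2 := by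
      intro i hi
      rw [Finset.mem_range] at hi
      have hmi : s i ∈ Set.Icc (0:ℝ) L := hs_mem i hi.le
      have hmi1 : s (i+1) ∈ Set.Icc (0:ℝ) L := hs_mem (i+1) hi
      have hsle : s i ≤ s (i+1) := by have := hstep i; linarith
      set a := φ (s i) with ha_def
      set b := φ (s (i+1)) with hb_def
      have hab : a ≤ b := hmono hmi hmi1 hsle
      have hbKΔ : b - a ≤ K * Δ := by
        have h1 := hlip (s (i+1)) hmi1 (s i) hmi
        rw [abs_of_nonneg (sub_nonneg.2 hab)] at h1
        calc b - a ≤ K * |s (i+1) - s i| := h1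
          _ = K * Δ := by rw [hstep i, abs_of_pos hΔ]
      have ha0 : 0 ≤ a := by
        rw [← h0]; exact hmono ⟨le_rfl, hL.le⟩ hmi hmi.1
      have hbΩ : b ≤ Ω := by
        rw [← hΩL]; exact hmono hmi1 ⟨hL.le, le_rfl⟩ hmi1.2
      have hsb : 0 ≤ Real.sin b :=
        Real.sin_nonneg_of_nonneg_of_le_pi (ha0.trans hab) (hbΩ.trans hΩπ.le)
      have step1 : Real.cos a - Real.cos b ≤ (b - a) * Real.sin b + (b - a)^2 / 2 := by
        have h1 : ∫ θ in a..b, Real.sin θ = Real.cos a - Real.cos b := integral_sin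
        have h2 : ∫ θ in a..b, Real.sin θ ≤ ∫ θ in a..b, (Real.sin b + (b - θ)) := by
          apply intervalIntegral.integral_mono_on hab intervalIntegrable_sin
          · exact intervalIntegrable_const.add
              (intervalIntegrable_const.sub intervalIntegrable_id)
          · intro θ hθ
            have h3 := abs_le.1 (sin_lip θ b)
            have h4 : |θ - b| = b - θ := by
              rw [abs_of_nonpos (by linarith [hθ.2])]; ring
            rw [h4] at h3
            linarith [h3.2]
        have h4 : ∫ θ in a..b, (Real.sin b + (b - θ))
            = (b - a) * Real.sin b + (b - a)^2 / 2 := by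
          rw [intervalIntegral.integral_add intervalIntegrable_const
              (intervalIntegrable_const.sub intervalIntegrable_id),
            intervalIntegral.integral_sub intervalIntegrable_const intervalIntegrable_id,
            intervalIntegral.integral_const, integral_id, intervalIntegral.integral_const]
          simp only [smul_eq_mul]
          ring
        linarith
      have step2 : Δ * (Real.sin b - K * Δ) ≤ ∫ u in s i..s (i+1), Real.sin (φ u) := by
        have h5 : ∫ u in s i..s (i+1), (Real.sin b - K * Δ)
            ≤ ∫ u in s i..s (i+1), Real.sin (φ u) := by
          apply intervalIntegral.integral_mono_on hsle intervalIntegrable_const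
            (hInt _ _ hmi hmi1)
          intro u hu
          have hum : u ∈ Set.Icc (0:ℝ) L := ⟨le_trans hmi.1 hu.1, le_trans hu.2 hmi1.2⟩
          have h6 := abs_le.1 (sin_lip (φ u) b)
          have h7 := hlip u hum (s (i+1)) hmi1
          have h8 : |u - s (i+1)| ≤ Δ := by
            rw [abs_of_nonpos (by linarith [hu.2])]
            have := hstep i; linarith [hu.1]
          have h9 : K * |u - s (i+1)| ≤ K * Δ := mul_le_mul_of_nonneg_left h8 hK
          have h10 := abs_le.1 (h7.trans h9)
          linarith [h6.1, h10.1]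
        calc Δ * (Real.sin b - K * Δ)
            = ∫ u in s i..s (i+1), (Real.sin b - K * Δ) := by
              rw [intervalIntegral.integral_const, smul_eq_mul, hstep i]
          _ ≤ _ := h5
      have h8 : K * (Δ * (Real.sin b - K * Δ)) ≤ K * ∫ u in s i..s (i+1), Real.sin (φ u) :=
        mul_le_mul_of_nonneg_left step2 hK
      have h9 : (b - a) * Real.sin b ≤ (K * Δ) * Real.sin b :=
        mul_le_mul_of_nonneg_right hbKΔ hsb
      have h10 : (b - a)^2 ≤ (K * Δ)^2 :=
        pow_le_pow_left₀ (sub_nonneg.2 hab) hbKΔ 2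
      nlinarith [h8, h9, h10]
    have tele : ∑ i ∈ Finset.range n, (Real.cos (φ (s i)) - Real.cos (φ (s (i+1))))
        = 1 - Real.cos Ω := by
      rw [Finset.sum_range_sub' (fun i => Real.cos (φ (s i)))]
      rw [hs0, hsn, h0, hΩL, Real.cos_zero]
    have hsum := Finset.sum_le_sum hper
    rw [tele] at hsum
    have hsplit : ∑ i ∈ Finset.range n, ∫ u in s i..s (i+1), Real.sin (φ u)
        = ∫ u in (0:ℝ)..L, Real.sin (φ u) := by
      rw [intervalIntegral.sum_integral_adjacent_intervals
        (fun k hk => hInt _ _ (hs_mem k hk.le) (hs_mem (k+1) hk))]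
      rw [hs0, hsn]
    calc 1 - Real.cos Ω
        ≤ ∑ i ∈ Finset.range n,
            (K * (∫ u in s i..s (i+1), Real.sin (φ u)) + 3/2 * K^2 * Δ^2) := hsum
      _ = K * (∫ s in (0:ℝ)..L, Real.sin (φ s)) + n * (3/2 * K^2 * Δ^2) := by
          rw [Finset.sum_add_distrib, ← Finset.mul_sum, hsplit, Finset.sum_const,
            Finset.card_range, nsmul_eq_mul]
  apply le_of_forall_pos_lt_add
  intro ε hε
  obtain ⟨n, hn⟩ := exists_nat_gt (max 1 (3/2 * K^2 * L^2 / ε))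
  have hn1 : 0 < n := by
    have h1 : (1:ℝ) < n := (le_max_left _ _).trans_lt hn
    exact_mod_cast Nat.cast_pos.1 (by linarith : (0:ℝ) < n)
  have hnR : (0:ℝ) < n := Nat.cast_pos.2 hn1
  refine (key n hn1).trans_lt ?_
  have heq : (n:ℝ) * (3/2 * K^2 * (L/n)^2) = 3/2 * K^2 * L^2 / n := by
    field_simp
  rw [heq]
  have h2 : 3/2 * K^2 * L^2 / ε < n := (le_max_right _ _).trans_lt hn
  have h3 : 3/2 * K^2 * L^2 < n * ε := by
    rw [div_lt_iff₀ hε] at h2; linarith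
  have h4 : 3/2 * K^2 * L^2 / n < ε := by
    rw [div_lt_iff₀ hnR]; linarith
  linarith

lemma core_ineq' {Ω L K : ℝ} {φ : ℝ → ℝ} (hΩ0 : 0 < Ω) (hΩπ : Ω < Real.pi)
    (hL : 0 < L) (hmono : MonotoneOn φ (Set.Icc 0 L)) (hK : 0 ≤ K)
    (hlip : LipOn φ L K) (h0 : φ 0 = 0) (hΩL : φ L = Ω) :
    1 - Real.cos Ω ≤ K * ∫ s in (0:ℝ)..L, Real.sin (Ω - φ s) := by
  have hsub : ∀ x : ℝ, x ∈ Set.Icc (0:ℝ) L → L - x ∈ Set.Icc (0:ℝ) L := by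
    intro x hx; exact ⟨by linarith [hx.2], by linarith [hx.1]⟩
  have hrev := core_ineq (φ := fun u => Ω - φ (L - u)) hΩ0 hΩπ hL ?_ hK ?_ ?_ ?_
  · have heq : ∫ u in (0:ℝ)..L, Real.sin ((fun u => Ω - φ (L - u)) u)
        = ∫ s in (0:ℝ)..L, Real.sin (Ω - φ s) := by
      have h1 := intervalIntegral.integral_comp_sub_left (a := (0:ℝ)) (b := L)
        (fun u => Real.sin (Ω - φ u)) L
      simpa using h1
    rwa [heq] at hrev
  · intro x hx y hy hxy
    have h1 : L - y ≤ L - x := by linarith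
    have h2 := hmono (hsub y hy) (hsub x hx) h1
    simp only
    linarith
  · intro x hx y hy
    have h1 := hlip (L - y) (hsub y hy) (L - x) (hsub x hx)
    have h2 : L - y - (L - x) = x - y := by ring
    rw [h2] at h1
    have h3 : Ω - φ (L - x) - (Ω - φ (L - y)) = φ (L - y) - φ (L - x) := by ring
    simp only
    rw [h3]
    exact h1
  · simp [hΩL]
  · simp [h0]

lemma integral_sin_sub_eq {Ω L : ℝ} {φ : ℝ → ℝ} (hL : 0 < L)
    (hcont : ContinuousOn φ (Set.Icc 0 L)) :
    ∫ s in (0:ℝ)..L, Real.sin (Ω - φ s) =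
      Real.sin Ω * (∫ s in (0:ℝ)..L, Real.cos (φ s)) -
      Real.cos Ω * (∫ s in (0:ℝ)..L, Real.sin (φ s)) := by
  have hIcc : Set.uIcc (0:ℝ) L = Set.Icc 0 L := Set.uIcc_of_le hL.le
  have hcos : IntervalIntegrable (fun s => Real.cos (φ s)) MeasureTheory.volume 0 L := by
    apply ContinuousOn.intervalIntegrable
    rw [hIcc]; exact Real.continuous_cos.comp_continuousOn hcont
  have hsin : IntervalIntegrable (fun s => Real.sin (φ s)) MeasureTheory.volume 0 L := by
    apply ContinuousOn.intervalIntegrable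
    rw [hIcc]; exact Real.continuous_sin.comp_continuousOn hcont
  calc ∫ s in (0:ℝ)..L, Real.sin (Ω - φ s)
      = ∫ s in (0:ℝ)..L,
          (Real.sin Ω * Real.cos (φ s) - Real.cos Ω * Real.sin (φ s)) := by
        apply intervalIntegral.integral_congr
        intro s _
        simp only [Real.sin_sub]
    _ = _ := by
        rw [intervalIntegral.integral_sub (hcos.const_mul _) (hsin.const_mul _),
          intervalIntegral.integral_const_mul, intervalIntegral.integral_const_mul]

lemma branchA_integral {Ω R d L : ℝ} (hR : 0 < R) (hd : 0 ≤ d) (hΩ0 : 0 < Ω)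
    (hL : L = R * Ω + d) :
    ∫ s in (0:ℝ)..L, Real.sin (Ω - min s (R * Ω) / R) = R * (1 - Real.cos Ω) := by
  have hRΩ : 0 < R * Ω := mul_pos hR hΩ0
  have hRΩL : R * Ω ≤ L := by rw [hL]; linarith
  have hcont : Continuous fun s : ℝ => Real.sin (Ω - min s (R * Ω) / R) := by
    apply Real.continuous_sin.comp
    exact continuous_const.sub ((continuous_id.min continuous_const).div_const R)
  have hsplit := intervalIntegral.integral_add_adjacent_intervals (a := (0:ℝ)) (b := R * Ω)
    (c := L) (f := fun s => Real.sin (Ω - min s (R * Ω) / R))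
    (hcont.intervalIntegrable (μ := MeasureTheory.volume) _ _)
    (hcont.intervalIntegrable (μ := MeasureTheory.volume) _ _)
  have h1 : ∫ s in (0:ℝ)..(R * Ω), Real.sin (Ω - min s (R * Ω) / R)
      = R * (1 - Real.cos Ω) := by
    have hcg : ∫ s in (0:ℝ)..(R * Ω), Real.sin (Ω - min s (R * Ω) / R)
        = ∫ s in (0:ℝ)..(R * Ω), Real.sin (Ω - s / R) := by
      apply intervalIntegral.integral_congr
      intro s hs
      rw [Set.uIcc_of_le hRΩ.le] at hs
      show Real.sin (Ω - min s (R * Ω) / R) = Real.sin (Ω - s / R)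
      rw [min_eq_left hs.2]
    rw [hcg]
    have hcd := intervalIntegral.integral_comp_div (a := (0:ℝ)) (b := R * Ω)
      (c := R) (f := fun u => Real.sin (Ω - u)) hR.ne'
    rw [hcd, zero_div, mul_comm R Ω, mul_div_assoc, div_self hR.ne', mul_one]
    have hcs := intervalIntegral.integral_comp_sub_left (a := (0:ℝ)) (b := Ω)
      (fun u => Real.sin u) Ω
    rw [hcs, sub_self, sub_zero, integral_sin, Real.cos_zero, smul_eq_mul]
  have h2 : ∫ s in (R * Ω)..L, Real.sin (Ω - min s (R * Ω) / R) = 0 := by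
    have hcg : ∫ s in (R * Ω)..L, Real.sin (Ω - min s (R * Ω) / R)
        = ∫ s in (R * Ω)..L, (0:ℝ) := by
      apply intervalIntegral.integral_congr
      intro s hs
      rw [Set.uIcc_of_le hRΩL] at hs
      show Real.sin (Ω - min s (R * Ω) / R) = 0
      rw [min_eq_right hs.1, mul_comm R Ω, mul_div_assoc, div_self hR.ne', mul_one,
        sub_self, Real.sin_zero]
    rw [hcg, intervalIntegral.integral_zero]
  rw [← hsplit, h1, h2, add_zero]

lemma branchB_integral {Ω R d L : ℝ} (hR : 0 < R) (hd : 0 ≤ d) (hΩ0 : 0 < Ω)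
    (hL : L = R * Ω + d) :
    ∫ s in (0:ℝ)..L, Real.sin (max (s - d) 0 / R) = R * (1 - Real.cos Ω) := by
  have hRΩ : 0 < R * Ω := mul_pos hR hΩ0
  have hdL : d ≤ L := by rw [hL]; linarith
  have hcont : Continuous fun s : ℝ => Real.sin (max (s - d) 0 / R) := by
    apply Real.continuous_sin.comp
    exact ((continuous_id.sub continuous_const).max continuous_const).div_const R
  have hsplit := intervalIntegral.integral_add_adjacent_intervals (a := (0:ℝ)) (b := d)
    (c := L) (f := fun s => Real.sin (max (s - d) 0 / R))
    (hcont.intervalIntegrable (μ := MeasureTheory.volume) _ _)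
    (hcont.intervalIntegrable (μ := MeasureTheory.volume) _ _)
  have h1 : ∫ s in (0:ℝ)..d, Real.sin (max (s - d) 0 / R) = 0 := by
    have hcg : ∫ s in (0:ℝ)..d, Real.sin (max (s - d) 0 / R)
        = ∫ s in (0:ℝ)..d, (0:ℝ) := by
      apply intervalIntegral.integral_congr
      intro s hs
      rw [Set.uIcc_of_le hd] at hs
      show Real.sin (max (s - d) 0 / R) = 0
      rw [max_eq_right (by linarith [hs.2] : s - d ≤ 0), zero_div, Real.sin_zero]
    rw [hcg, intervalIntegral.integral_zero]
  have h2 : ∫ s in d..L, Real.sin (max (s - d) 0 / R) = R * (1 - Real.cos Ω) := by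
    have hcg : ∫ s in d..L, Real.sin (max (s - d) 0 / R)
        = ∫ s in d..L, Real.sin ((s - d) / R) := by
      apply intervalIntegral.integral_congr
      intro s hs
      rw [Set.uIcc_of_le hdL] at hs
      show Real.sin (max (s - d) 0 / R) = Real.sin ((s - d) / R)
      rw [max_eq_left (by linarith [hs.1] : (0:ℝ) ≤ s - d)]
    rw [hcg]
    have hcs := intervalIntegral.integral_comp_sub_right (a := d) (b := L)
      (f := fun u => Real.sin (u / R)) d
    rw [hcs, sub_self, hL]
    have hLd : R * Ω + d - d = R * Ω := by ring
    rw [hLd]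
    have hcd := intervalIntegral.integral_comp_div (a := (0:ℝ)) (b := R * Ω)
      (c := R) (f := fun u => Real.sin u) hR.ne'
    rw [hcd, zero_div, mul_comm R Ω, mul_div_assoc, div_self hR.ne', mul_one,
      integral_sin, Real.cos_zero, smul_eq_mul]
  rw [← hsplit, h1, h2, zero_add]

/-- Every admissible curve has maximal curvature at least `1/R_a`; the infimum of the
maximal curvature over admissible curves is attained, equals `1/R_a`, and is attained
by the arc-plus-segment curve `(L_J, φ_J)`. -/
theorem stmt1 (Ω b₁ b₂ u₀ v₀ R_a d L_J : ℝ) (φ_J : ℝ → ℝ)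
    (hΩ : Ω ∈ Set.Ioo 0 Real.pi) (hu : 0 < u₀) (hv : 0 < v₀)
    (hb₁ : b₁ = u₀ + v₀ * Real.cos Ω) (hb₂ : b₂ = v₀ * Real.sin Ω)
    (hRa : 0 < R_a) (hd : 0 ≤ d)
    (hJ : Admissible Ω b₁ b₂ L_J φ_J) (hshape : ArcSeg Ω R_a d L_J φ_J) :
    (∀ L : ℝ, ∀ φ : ℝ → ℝ, Admissible Ω b₁ b₂ L φ → 1 / R_a ≤ maxCurv φ L) ∧
    maxCurv φ_J L_J = 1 / R_a ∧
    IsLeast {e : ℝ | ∃ L : ℝ, ∃ φ : ℝ → ℝ, Admissible Ω b₁ b₂ L φ ∧ maxCurv φ L = e}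
      (1 / R_a) := by
  obtain ⟨hΩ0, hΩπ⟩ := hΩ
  have hsin : 0 < Real.sin Ω := Real.sin_pos_of_pos_of_lt_pi hΩ0 hΩπ
  have hcos1 : Real.cos Ω < 1 := by
    have h := Real.cos_lt_cos_of_nonneg_of_le_pi le_rfl hΩπ.le hΩ0
    simpa using h
  have hcospos : 0 < 1 - Real.cos Ω := by linarith
  have hkey : ∀ L : ℝ, ∀ φ : ℝ → ℝ, Admissible Ω b₁ b₂ L φ →
      ∀ K : ℝ, 0 ≤ K → LipOn φ L K → 1 / R_a ≤ K := by
    intro L φ hadm K hK hlip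
    obtain ⟨hL, hmono, -, h0, hΩL, hb1, hb2⟩ := hadm
    have hmain : 1 - Real.cos Ω ≤ K * (R_a * (1 - Real.cos Ω)) := by
      rcases hshape with ⟨hLeq, hform⟩ | ⟨hLeq, hform⟩
      · obtain ⟨hLJ, hmonoJ, ⟨KJ, hKJ0, hlipJ⟩, h0J, hΩLJ, hb1J, hb2J⟩ := hJ
        have hIJ : ∫ s in (0:ℝ)..L_J, Real.sin (Ω - φ_J s)
            = Real.sin Ω * b₁ - Real.cos Ω * b₂ := by
          rw [integral_sin_sub_eq hLJ hlipJ.continuousOn, hb1J, hb2J]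
        have hIJ2 : ∫ s in (0:ℝ)..L_J, Real.sin (Ω - φ_J s)
            = R_a * (1 - Real.cos Ω) := by
          rw [← branchA_integral hRa hd hΩ0 hLeq]
          apply intervalIntegral.integral_congr
          intro s hs
          rw [Set.uIcc_of_le hLJ.le] at hs
          show Real.sin (Ω - φ_J s) = Real.sin (Ω - min s (R_a * Ω) / R_a)
          rw [hform s hs]
        have h4 := core_ineq' hΩ0 hΩπ hL hmono hK hlip h0 hΩL
        rw [integral_sin_sub_eq hL hlip.continuousOn, hb1, hb2] at h4
        have h5 : Real.sin Ω * b₁ - Real.cos Ω * b₂ = R_a * (1 - Real.cos Ω) := by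
          rw [← hIJ, hIJ2]
        rw [h5] at h4
        exact h4
      · obtain ⟨hLJ, hmonoJ, hKexJ, h0J, hΩLJ, hb1J, hb2J⟩ := hJ
        have hIJ2 : b₂ = R_a * (1 - Real.cos Ω) := by
          rw [← hb2J, ← branchB_integral hRa hd hΩ0 hLeq]
          apply intervalIntegral.integral_congr
          intro s hs
          rw [Set.uIcc_of_le hLJ.le] at hs
          show Real.sin (φ_J s) = Real.sin (max (s - d) 0 / R_a)
          rw [hform s hs]
        have h4 := core_ineq hΩ0 hΩπ hL hmono hK hlip h0 hΩL
        rw [hb2, hIJ2] at h4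
        exact h4
    rw [div_le_iff₀ hRa]
    nlinarith [hmain, hcospos]
  have part1 : ∀ L : ℝ, ∀ φ : ℝ → ℝ, Admissible Ω b₁ b₂ L φ → 1 / R_a ≤ maxCurv φ L := by
    intro L φ hadm
    obtain ⟨K₀, hK₀⟩ := hadm.2.2.1
    exact le_csInf ⟨K₀, hK₀⟩ (fun K hKmem => hkey L φ hadm K hKmem.1 hKmem.2)
  have hlipJa : LipOn φ_J L_J (1 / R_a) := by
    intro x hx y hy
    rcases hshape with ⟨hLeq, hform⟩ | ⟨hLeq, hform⟩
    · have hm : |min x (R_a * Ω) - min y (R_a * Ω)| ≤ |x - y| := by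
        have h := abs_min_sub_min_le_max x (R_a * Ω) y (R_a * Ω)
        rw [sub_self, abs_zero, max_eq_left (abs_nonneg _)] at h
        exact h
      rw [hform x hx, hform y hy, div_sub_div_same, abs_div, abs_of_pos hRa]
      calc |min x (R_a * Ω) - min y (R_a * Ω)| / R_a ≤ |x - y| / R_a := by gcongr
        _ = 1 / R_a * |x - y| := by ring
    · have hm : |max (x - d) 0 - max (y - d) 0| ≤ |x - y| := by
        have h := abs_max_sub_max_le_abs (x - d) (y - d) 0
        have h2 : x - d - (y - d) = x - y := by ring
        rw [h2] at h
        exact h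
      rw [hform x hx, hform y hy, div_sub_div_same, abs_div, abs_of_pos hRa]
      calc |max (x - d) 0 - max (y - d) 0| / R_a ≤ |x - y| / R_a := by gcongr
        _ = 1 / R_a * |x - y| := by ring
  have part2 : maxCurv φ_J L_J = 1 / R_a := by
    refine le_antisymm ?_ (part1 L_J φ_J hJ)
    apply csInf_le ⟨0, fun K hKmem => hKmem.1⟩
    exact ⟨(one_div_pos.2 hRa).le, hlipJa⟩
  refine ⟨part1, part2, ⟨⟨L_J, φ_J, hJ, part2⟩, ?_⟩⟩
  rintro e ⟨L, φ, hadm, rfl⟩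
  exact part1 L φ hadm
end

section
/- If at least one admissible curve exists, then there exist u₀ > 0 and v₀ > 0 such that (b₁, b₂) = u₀·(1, 0) + v₀·(cos Ω, sin Ω). (Geometrically: the tangent line to the curve at A, directed by α, and the tangent line at B, directed by β, meet at a point O distinct from A and from B, with vectors AO = u₀·α and OB = v₀·β where u₀ and v₀ are strictly positive.) -/
open Real

/-- aux: nonneg on [a,b], pos on (b,c) -/
lemma integral_pos_right (f : ℝ → ℝ) (a b c : ℝ) (hab : a ≤ b) (hbc : b < c)
    (hf : ContinuousOn f (Set.Icc a c))
    (h1 : ∀ x ∈ Set.Icc a b, 0 ≤ f x) (h2 : ∀ x ∈ Set.Ioo b c, 0 < f x) :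
    0 < ∫ x in a..c, f x := by
  have hi1 : IntervalIntegrable f MeasureTheory.volume a b := by
    apply ContinuousOn.intervalIntegrable
    apply hf.mono
    rw [Set.uIcc_of_le hab]
    exact Set.Icc_subset_Icc le_rfl hbc.le
  have hi2 : IntervalIntegrable f MeasureTheory.volume b c := by
    apply ContinuousOn.intervalIntegrable
    apply hf.mono
    rw [Set.uIcc_of_le hbc.le]
    exact Set.Icc_subset_Icc hab le_rfl
  rw [← intervalIntegral.integral_add_adjacent_intervals hi1 hi2]
  have A : 0 ≤ ∫ x in a..b, f x := intervalIntegral.integral_nonneg hab h1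
  have B : 0 < ∫ x in b..c, f x :=
    intervalIntegral.intervalIntegral_pos_of_pos_on hi2 h2 hbc
  linarith

/-- aux: pos on (a,b), nonneg on [b,c] -/
lemma integral_pos_left (f : ℝ → ℝ) (a b c : ℝ) (hab : a < b) (hbc : b ≤ c)
    (hf : ContinuousOn f (Set.Icc a c))
    (h1 : ∀ x ∈ Set.Ioo a b, 0 < f x) (h2 : ∀ x ∈ Set.Icc b c, 0 ≤ f x) :
    0 < ∫ x in a..c, f x := by
  have hi1 : IntervalIntegrable f MeasureTheory.volume a b := by
    apply ContinuousOn.intervalIntegrable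
    apply hf.mono
    rw [Set.uIcc_of_le hab.le]
    exact Set.Icc_subset_Icc le_rfl hbc
  have hi2 : IntervalIntegrable f MeasureTheory.volume b c := by
    apply ContinuousOn.intervalIntegrable
    apply hf.mono
    rw [Set.uIcc_of_le hbc]
    exact Set.Icc_subset_Icc hab.le le_rfl
  rw [← intervalIntegral.integral_add_adjacent_intervals hi1 hi2]
  have A : 0 < ∫ x in a..b, f x :=
    intervalIntegral.intervalIntegral_pos_of_pos_on hi1 h1 hab
  have B : 0 ≤ ∫ x in b..c, f x := intervalIntegral.integral_nonneg hbc h2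
  linarith

/-- If at least one admissible curve exists, then `(b₁, b₂) = u₀·(1,0) + v₀·(cos Ω, sin Ω)`
for some `u₀ > 0` and `v₀ > 0`. -/
theorem stmt3 (Ω b₁ b₂ : ℝ) (hΩ : Ω ∈ Set.Ioo 0 Real.pi)
    (h : ∃ L : ℝ, ∃ φ : ℝ → ℝ, Admissible Ω b₁ b₂ L φ) :
    ∃ u₀ > (0:ℝ), ∃ v₀ > (0:ℝ),
      b₁ = u₀ + v₀ * Real.cos Ω ∧ b₂ = v₀ * Real.sin Ω := by
  obtain ⟨L, φ, hL, hmono, ⟨K, hK0, hlip⟩, h0, hLΩ, hb1, hb2⟩ := h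
  obtain ⟨hΩ0, hΩπ⟩ := hΩ
  set K' : ℝ := max K 1 with hK'
  have hK'1 : (1:ℝ) ≤ K' := le_max_right _ _
  have hK'pos : (0:ℝ) < K' := lt_of_lt_of_le one_pos hK'1
  have hlip' : LipOn φ L K' := by
    intro s hs t ht
    refine (hlip s hs t ht).trans ?_
    have h1 : 0 ≤ |s - t| := abs_nonneg _
    nlinarith [le_max_left K 1]
  have hφcont : ContinuousOn φ (Set.Icc 0 L) := by
    have hl : LipschitzOnWith (Real.toNNReal K') φ (Set.Icc 0 L) := by
      rw [lipschitzOnWith_iff_dist_le_mul]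
      intro x hx y hy
      have := hlip' x hx y hy
      simpa [Real.dist_eq, Real.coe_toNNReal K' hK'pos.le] using this
    exact hl.continuousOn
  have hφ_mem : ∀ x ∈ Set.Icc (0:ℝ) L, φ x ∈ Set.Icc (0:ℝ) Ω := by
    intro x hx
    constructor
    · have := hmono (Set.left_mem_Icc.mpr hL.le) hx hx.1
      rw [h0] at this; exact this
    · have := hmono hx (Set.right_mem_Icc.mpr hL.le) hx.2
      rw [hLΩ] at this; exact this
  set δ : ℝ := min L (Ω / (2 * K')) with hδ
  have hδpos : 0 < δ := lt_min hL (by positivity)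
  have hδL : δ ≤ L := min_le_left _ _
  have hδΩ : K' * δ ≤ Ω / 2 := by
    have h1 : δ ≤ Ω / (2 * K') := min_le_right _ _
    calc K' * δ ≤ K' * (Ω / (2 * K')) := by nlinarith
    _ = Ω / 2 := by field_simp
  -- b₂ > 0
  have hb2pos : 0 < b₂ := by
    rw [← hb2]
    apply integral_pos_right (fun s => Real.sin (φ s)) 0 (L - δ) L (by linarith) (by linarith)
      (Real.continuous_sin.comp_continuousOn hφcont)
    · intro x hx
      have hx' : x ∈ Set.Icc (0:ℝ) L := ⟨hx.1, by linarith [hx.2]⟩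
      have hm := hφ_mem x hx'
      exact Real.sin_nonneg_of_nonneg_of_le_pi hm.1 (hm.2.trans hΩπ.le)
    · intro x hx
      have hx' : x ∈ Set.Icc (0:ℝ) L := ⟨by linarith [hx.1], hx.2.le⟩
      have hmem := hφ_mem x hx'
      have hLmem : (L:ℝ) ∈ Set.Icc (0:ℝ) L := Set.right_mem_Icc.mpr hL.le
      have habs : |φ L - φ x| ≤ K' * |L - x| := hlip' L hLmem x hx'
      rw [hLΩ, abs_of_nonneg (by linarith [hx.2] : (0:ℝ) ≤ L - x)] at habs
      have h2 := (abs_le.mp habs).2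
      have hφpos : 0 < φ x := by
        have h3 : L - x < δ := by linarith [hx.1]
        nlinarith
      exact Real.sin_pos_of_pos_of_lt_pi hφpos (lt_of_le_of_lt hmem.2 hΩπ)
  -- sinΩ*b₁ - cosΩ*b₂ > 0
  have hic : IntervalIntegrable (fun s => Real.cos (φ s)) MeasureTheory.volume 0 L := by
    apply ContinuousOn.intervalIntegrable
    apply (Real.continuous_cos.comp_continuousOn hφcont).mono
    rw [Set.uIcc_of_le hL.le]
  have his : IntervalIntegrable (fun s => Real.sin (φ s)) MeasureTheory.volume 0 L := by
    apply ContinuousOn.intervalIntegrable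
    apply (Real.continuous_sin.comp_continuousOn hφcont).mono
    rw [Set.uIcc_of_le hL.le]
  have hkey : Real.sin Ω * b₁ - Real.cos Ω * b₂ = ∫ s in (0:ℝ)..L, Real.sin (Ω - φ s) := by
    rw [← hb1, ← hb2, ← intervalIntegral.integral_const_mul,
      ← intervalIntegral.integral_const_mul,
      ← intervalIntegral.integral_sub (hic.const_mul _) (his.const_mul _)]
    apply intervalIntegral.integral_congr
    intro s _
    simp [Real.sin_sub]
  have hkeypos : 0 < Real.sin Ω * b₁ - Real.cos Ω * b₂ := by
    rw [hkey]
    apply integral_pos_left (fun s => Real.sin (Ω - φ s)) 0 δ L hδpos hδL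
      ((Real.continuous_sin.comp (continuous_const.sub continuous_id)).comp_continuousOn hφcont)
    · intro x hx
      have hx' : x ∈ Set.Icc (0:ℝ) L := ⟨hx.1.le, hx.2.le.trans hδL⟩
      have hmem := hφ_mem x hx'
      have h0mem : (0:ℝ) ∈ Set.Icc (0:ℝ) L := Set.left_mem_Icc.mpr hL.le
      have habs : |φ x - φ 0| ≤ K' * |x - 0| := hlip' x hx' 0 h0mem
      rw [h0, sub_zero, sub_zero, abs_of_nonneg hx.1.le] at habs
      have h2 := (abs_le.mp habs).2
      have hub : φ x < Ω := by nlinarith [hx.2]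
      exact Real.sin_pos_of_pos_of_lt_pi (by linarith) (by linarith [hmem.1])
    · intro x hx
      have hx' : x ∈ Set.Icc (0:ℝ) L := ⟨by linarith [hx.1], hx.2⟩
      have hmem := hφ_mem x hx'
      exact Real.sin_nonneg_of_nonneg_of_le_pi (by linarith [hmem.2]) (by linarith [hmem.1])
  have hsinpos : 0 < Real.sin Ω := Real.sin_pos_of_pos_of_lt_pi hΩ0 hΩπ
  refine ⟨(Real.sin Ω * b₁ - Real.cos Ω * b₂) / Real.sin Ω, by positivity,
    b₂ / Real.sin Ω, by positivity, ?_, ?_⟩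
  · field_simp
    ring
  · field_simp
end

section
/- Let (L, φ) be an admissible curve with plane curve X = (x, y), and let s₀ = sup{s ∈ [0, L] : φ(s) = 0}, so that 0 < φ(s) ≤ Ω < π for all s ∈ (s₀, L]. Define, for s ∈ (s₀, L], the quantity u(s) = x(s) − y(s)·cos(φ(s))/sin(φ(s)) (the abscissa of the intersection of the tangent line at X(s) with the x-axis, i.e. with the line through A directed by α). Then u is nondecreasing on (s₀, L], and u(s) ≥ 0 for all s ∈ (s₀, L]. -/
open Real

lemma aux_integrand_nonneg (a b : ℝ) (ha : 0 ≤ a) (hab : a ≤ b) (hb0 : 0 < b)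
    (hbπ : b < Real.pi) :
    0 ≤ Real.cos a - Real.sin a * (Real.cos b / Real.sin b) := by
  have hsb : 0 < Real.sin b := Real.sin_pos_of_pos_of_lt_pi hb0 hbπ
  have h1 : Real.cos a - Real.sin a * (Real.cos b / Real.sin b)
      = Real.sin (b - a) / Real.sin b := by
    rw [Real.sin_sub]; field_simp
  rw [h1]
  exact div_nonneg (Real.sin_nonneg_of_nonneg_of_le_pi (by linarith) (by linarith)) hsb.le

lemma aux_cot_antitone (a b : ℝ) (ha : 0 < a) (hab : a ≤ b) (hbπ : b < Real.pi) :
    Real.cos b / Real.sin b ≤ Real.cos a / Real.sin a := by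
  have hsa : 0 < Real.sin a := Real.sin_pos_of_pos_of_lt_pi ha (lt_of_le_of_lt hab hbπ)
  have hsb : 0 < Real.sin b := Real.sin_pos_of_pos_of_lt_pi (lt_of_lt_of_le ha hab) hbπ
  rw [div_le_div_iff₀ hsb hsa]
  have h := Real.sin_nonneg_of_nonneg_of_le_pi (sub_nonneg.2 hab) (by linarith : b - a ≤ Real.pi)
  rw [Real.sin_sub] at h
  nlinarith

/-- With `s₀ = sup {s ∈ [0,L] : φ s = 0}`, one has `0 < φ s ≤ Ω` on `(s₀, L]`, and the
abscissa `u(s) = x(s) − y(s)·cos(φ s)/sin(φ s)` of the intersection of the tangent at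
`X(s)` with the `x`-axis is nondecreasing and nonnegative on `(s₀, L]`. -/
theorem stmt5 (Ω b₁ b₂ L : ℝ) (φ : ℝ → ℝ) (hΩ : Ω ∈ Set.Ioo 0 Real.pi)
    (h : Admissible Ω b₁ b₂ L φ)
    (s₀ : ℝ) (hs₀ : s₀ = sSup {s ∈ Set.Icc (0:ℝ) L | φ s = 0}) :
    (∀ s ∈ Set.Ioc s₀ L, 0 < φ s ∧ φ s ≤ Ω) ∧
    MonotoneOn (fun s => xcoord φ s - ycoord φ s * Real.cos (φ s) / Real.sin (φ s))
      (Set.Ioc s₀ L) ∧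
    ∀ s ∈ Set.Ioc s₀ L,
      0 ≤ xcoord φ s - ycoord φ s * Real.cos (φ s) / Real.sin (φ s) := by
  obtain ⟨hL, hmono, ⟨K, hK0, hlip⟩, hφ0, hφL, -, -⟩ := h
  have hΩπ : Ω < Real.pi := hΩ.2
  have contφ : ContinuousOn φ (Set.Icc 0 L) := by
    have : LipschitzOnWith (Real.toNNReal K) φ (Set.Icc 0 L) := by
      apply LipschitzOnWith.of_dist_le_mul
      intro x hx y hy
      simpa [Real.dist_eq, Real.coe_toNNReal K hK0] using hlip x hx y hy
    exact this.continuousOn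
  -- basic facts about s₀
  have h0S : (0:ℝ) ∈ {s ∈ Set.Icc (0:ℝ) L | φ s = 0} := ⟨⟨le_refl 0, hL.le⟩, hφ0⟩
  have hbdd : BddAbove {s ∈ Set.Icc (0:ℝ) L | φ s = 0} := ⟨L, fun x hx => hx.1.2⟩
  have hs₀0 : 0 ≤ s₀ := hs₀ ▸ le_csSup hbdd h0S
  -- nonnegativity and bound of φ
  have hφnn : ∀ s ∈ Set.Icc (0:ℝ) L, 0 ≤ φ s := fun s hs =>
    hφ0 ▸ hmono ⟨le_refl 0, hL.le⟩ hs hs.1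
  have hφub : ∀ s ∈ Set.Icc (0:ℝ) L, φ s ≤ Ω := fun s hs =>
    hφL ▸ hmono hs ⟨hL.le, le_refl L⟩ hs.2
  have hφpos : ∀ s ∈ Set.Ioc s₀ L, 0 < φ s ∧ φ s ≤ Ω := by
    intro s hs
    have hsmem : s ∈ Set.Icc (0:ℝ) L := ⟨le_trans hs₀0 hs.1.le, hs.2⟩
    have hne : φ s ≠ 0 := by
      intro heq
      have hmem : s ∈ {s ∈ Set.Icc (0:ℝ) L | φ s = 0} := ⟨hsmem, heq⟩
      have : s ≤ s₀ := hs₀ ▸ le_csSup hbdd hmem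
      linarith [hs.1]
    exact ⟨lt_of_le_of_ne (hφnn s hsmem) (Ne.symm hne), hφub s hsmem⟩
  -- integrability
  have hint : ∀ a ∈ Set.Icc (0:ℝ) L, ∀ b ∈ Set.Icc (0:ℝ) L, ∀ f : ℝ → ℝ, Continuous f →
      IntervalIntegrable (fun r => f (φ r)) MeasureTheory.volume a b := by
    intro a ha b hb f hf
    exact (hf.comp_continuousOn (contφ.mono (Set.uIcc_subset_Icc ha hb))).intervalIntegrable
  -- the basic integral computation
  have hIcalc : ∀ a ∈ Set.Icc (0:ℝ) L, ∀ b ∈ Set.Icc (0:ℝ) L, ∀ c : ℝ,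
      (∫ r in a..b, (Real.cos (φ r) - Real.sin (φ r) * c)) =
      (∫ r in a..b, Real.cos (φ r)) - (∫ r in a..b, Real.sin (φ r)) * c := by
    intro a ha b hb c
    rw [intervalIntegral.integral_sub (hint a ha b hb _ Real.continuous_cos)
      ((hint a ha b hb _ Real.continuous_sin).mul_const c),
      intervalIntegral.integral_mul_const]
  -- nonnegativity of the key integral
  have hInn : ∀ a ∈ Set.Icc (0:ℝ) L, ∀ b ∈ Set.Icc (0:ℝ) L, a ≤ b →
      ∀ w ∈ Set.Ioc s₀ L, b ≤ w →
      0 ≤ ∫ r in a..b, (Real.cos (φ r) - Real.sin (φ r) * (Real.cos (φ w) / Real.sin (φ w))) := by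
    intro a ha b hb hab w hw hbw
    have hwI : w ∈ Set.Icc (0:ℝ) L := ⟨le_trans hs₀0 hw.1.le, hw.2⟩
    apply intervalIntegral.integral_nonneg hab
    intro r hr
    have hrI : r ∈ Set.Icc (0:ℝ) L := ⟨le_trans ha.1 hr.1, le_trans hr.2 hb.2⟩
    exact aux_integrand_nonneg (φ r) (φ w) (hφnn r hrI)
      (hmono hrI hwI (le_trans hr.2 hbw)) (hφpos w hw).1
      (lt_of_le_of_lt (hφpos w hw).2 hΩπ)
  -- y is nonnegative
  have hynn : ∀ s ∈ Set.Icc (0:ℝ) L, 0 ≤ ycoord φ s := by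
    intro s hs
    apply intervalIntegral.integral_nonneg hs.1
    intro r hr
    have hrI : r ∈ Set.Icc (0:ℝ) L := ⟨hr.1, le_trans hr.2 hs.2⟩
    exact Real.sin_nonneg_of_nonneg_of_le_pi (hφnn r hrI)
      (le_trans (hφub r hrI) hΩπ.le)
  -- the nonnegativity claim (part 3)
  have part3 : ∀ s ∈ Set.Ioc s₀ L,
      0 ≤ xcoord φ s - ycoord φ s * Real.cos (φ s) / Real.sin (φ s) := by
    intro s hs
    have hsI : s ∈ Set.Icc (0:ℝ) L := ⟨le_trans hs₀0 hs.1.le, hs.2⟩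
    have h0I : (0:ℝ) ∈ Set.Icc (0:ℝ) L := ⟨le_refl 0, hL.le⟩
    have hc := hIcalc 0 h0I s hsI (Real.cos (φ s) / Real.sin (φ s))
    have hn := hInn 0 h0I s hsI hsI.1 s hs (le_refl s)
    rw [mul_div_assoc]
    show (0:ℝ) ≤ (∫ t in (0:ℝ)..s, Real.cos (φ t)) -
      (∫ t in (0:ℝ)..s, Real.sin (φ t)) * (Real.cos (φ s) / Real.sin (φ s))
    linarith [hc, hn]
  refine ⟨hφpos, ?_, part3⟩
  -- monotonicity
  intro s hs t ht hst
  have hsI : s ∈ Set.Icc (0:ℝ) L := ⟨le_trans hs₀0 hs.1.le, hs.2⟩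
  have htI : t ∈ Set.Icc (0:ℝ) L := ⟨le_trans hs₀0 ht.1.le, ht.2⟩
  have h0I : (0:ℝ) ∈ Set.Icc (0:ℝ) L := ⟨le_refl 0, hL.le⟩
  have hx : xcoord φ t - xcoord φ s = ∫ r in s..t, Real.cos (φ r) :=
    intervalIntegral.integral_interval_sub_left
      (hint 0 h0I t htI _ Real.continuous_cos) (hint 0 h0I s hsI _ Real.continuous_cos)
  have hy : ycoord φ t - ycoord φ s = ∫ r in s..t, Real.sin (φ r) :=
    intervalIntegral.integral_interval_sub_left
      (hint 0 h0I t htI _ Real.continuous_sin) (hint 0 h0I s hsI _ Real.continuous_sin)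
  have hc := hIcalc s hsI t htI (Real.cos (φ t) / Real.sin (φ t))
  have hn := hInn s hsI t htI hst t ht (le_refl t)
  have hy0 := hynn s hsI
  have hcot := aux_cot_antitone (φ s) (φ t) (hφpos s hs).1 (hmono hsI htI hst)
    (lt_of_le_of_lt (hφpos t ht).2 hΩπ)
  have hprod := mul_nonneg hy0 (sub_nonneg.2 hcot)
  have ex : xcoord φ t = xcoord φ s + ∫ r in s..t, Real.cos (φ r) := by linarith
  have ey : ycoord φ t = ycoord φ s + ∫ r in s..t, Real.sin (φ r) := by linarith
  simp only [ex, ey]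
  rw [mul_div_assoc, mul_div_assoc]
  nlinarith [hc, hn, hprod]
end

section
/- Assume Ω ∈ (0, π/2). Let (M, θ) be an admissible curve with plane curve Z = (x̂, ŷ) and maximal curvature e ≤ 1/R_a (so M ≥ l). Then on [0, l] the function s ↦ x̂(s) − R_a sin(s/R_a) is nondecreasing and the function s ↦ ŷ(s) − R_a (1 − cos(s/R_a)) is nonincreasing; consequently x̂(s) ≥ R_a sin(s/R_a) and ŷ(s) ≤ R_a (1 − cos(s/R_a)) for all s ∈ [0, l]. If moreover e < 1/R_a, then these two functions are strictly monotone on [0, l] and x̂(s) > R_a sin(s/R_a), ŷ(s) < R_a (1 − cos(s/R_a)) for all s ∈ (0, l]. -/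
open Real

/-- If `Ω ∈ (0, π/2)` and the admissible curve `(M, θ)` has maximal curvature
`e ≤ 1/R_a`, then `M ≥ l = R_a Ω`, on `[0, l]` the function `s ↦ x̂(s) − R_a sin(s/R_a)`
is nondecreasing and `s ↦ ŷ(s) − R_a (1 − cos(s/R_a))` is nonincreasing, with the
corresponding inequalities; if moreover `e < 1/R_a` these monotonicities and
inequalities are strict. -/
theorem stmt9 (Ω R_a D b₁ b₂ M : ℝ) (θ : ℝ → ℝ)
    (hΩ : Ω ∈ Set.Ioo 0 (Real.pi / 2)) (hRa : 0 < R_a) (hD : 0 ≤ D)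
    (hb₁ : b₁ = R_a * Real.sin Ω + D * Real.cos Ω)
    (hb₂ : b₂ = R_a * (1 - Real.cos Ω) + D * Real.sin Ω)
    (h : Admissible Ω b₁ b₂ M θ)
    (he : maxCurv θ M ≤ 1 / R_a) :
    R_a * Ω ≤ M ∧
    MonotoneOn (fun s => xcoord θ s - R_a * Real.sin (s / R_a))
      (Set.Icc 0 (R_a * Ω)) ∧
    AntitoneOn (fun s => ycoord θ s - R_a * (1 - Real.cos (s / R_a)))
      (Set.Icc 0 (R_a * Ω)) ∧
    (∀ s ∈ Set.Icc (0:ℝ) (R_a * Ω),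
      R_a * Real.sin (s / R_a) ≤ xcoord θ s ∧
      ycoord θ s ≤ R_a * (1 - Real.cos (s / R_a))) ∧
    (maxCurv θ M < 1 / R_a →
      StrictMonoOn (fun s => xcoord θ s - R_a * Real.sin (s / R_a))
        (Set.Icc 0 (R_a * Ω)) ∧
      StrictAntiOn (fun s => ycoord θ s - R_a * (1 - Real.cos (s / R_a)))
        (Set.Icc 0 (R_a * Ω)) ∧
      ∀ s ∈ Set.Ioc (0:ℝ) (R_a * Ω),
        R_a * Real.sin (s / R_a) < xcoord θ s ∧
        ycoord θ s < R_a * (1 - Real.cos (s / R_a))) := by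
  obtain ⟨hΩ0, hΩπ⟩ := hΩ
  obtain ⟨hM, hmono, hlip, hθ0, hθM, hxb, hyb⟩ := h
  have hSne : Set.Nonempty {K : ℝ | 0 ≤ K ∧ LipOn θ M K} := hlip
  have he0 : 0 ≤ maxCurv θ M := le_csInf hSne (fun K hK => hK.1)
  have heLip : LipOn θ M (maxCurv θ M) := by
    intro s hs t ht
    rcases eq_or_ne s t with rfl | hst
    · simp
    · have habs : 0 < |s - t| := abs_pos.mpr (sub_ne_zero.mpr hst)
      have hle : |θ s - θ t| / |s - t| ≤ maxCurv θ M :=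
        le_csInf hSne (fun K hK => (div_le_iff₀ habs).mpr (hK.2 s hs t ht))
      calc |θ s - θ t| = |θ s - θ t| / |s - t| * |s - t| := by field_simp
        _ ≤ maxCurv θ M * |s - t| := mul_le_mul_of_nonneg_right hle habs.le
  have hθnn : ∀ t ∈ Set.Icc (0:ℝ) M, 0 ≤ θ t := fun t ht =>
    hθ0 ▸ hmono ⟨le_rfl, hM.le⟩ ht ht.1
  have hθub : ∀ t ∈ Set.Icc (0:ℝ) M, θ t ≤ maxCurv θ M * t := by
    intro t ht
    have h1 := heLip t ht 0 ⟨le_rfl, hM.le⟩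
    rw [hθ0, sub_zero, sub_zero, abs_of_nonneg ht.1] at h1
    exact (le_abs_self _).trans h1
  have hlM : R_a * Ω ≤ M := by
    have h1 : Ω ≤ maxCurv θ M * M := hθM ▸ hθub M ⟨hM.le, le_rfl⟩
    have h2 : maxCurv θ M * R_a ≤ 1 := by
      rw [le_div_iff₀ hRa] at he; linarith
    nlinarith [mul_le_mul_of_nonneg_left h1 hRa.le]
  have hIl : Set.Icc (0:ℝ) (R_a * Ω) ⊆ Set.Icc 0 M := Set.Icc_subset_Icc_right hlM
  have hθcont : ContinuousOn θ (Set.Icc 0 M) := by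
    apply LipschitzOnWith.continuousOn (K := Real.toNNReal (maxCurv θ M))
    apply LipschitzOnWith.of_dist_le_mul
    intro x hx y hy
    rw [Real.dist_eq, Real.dist_eq, Real.coe_toNNReal _ he0]
    exact heLip x hx y hy
  have hintc : ∀ a ∈ Set.Icc (0:ℝ) M, ∀ b ∈ Set.Icc (0:ℝ) M,
      IntervalIntegrable (fun t => Real.cos (θ t)) MeasureTheory.volume a b := fun a ha b hb =>
    (Real.continuous_cos.comp_continuousOn (hθcont.mono (Set.uIcc_subset_Icc ha hb))).intervalIntegrable
  have hints : ∀ a ∈ Set.Icc (0:ℝ) M, ∀ b ∈ Set.Icc (0:ℝ) M,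
      IntervalIntegrable (fun t => Real.sin (θ t)) MeasureTheory.volume a b := fun a ha b hb =>
    (Real.continuous_sin.comp_continuousOn (hθcont.mono (Set.uIcc_subset_Icc ha hb))).intervalIntegrable
  have hintc' : ∀ a b : ℝ, IntervalIntegrable (fun t => Real.cos (t / R_a)) MeasureTheory.volume a b :=
    fun a b => (Real.continuous_cos.comp (continuous_id.div_const R_a)).intervalIntegrable a b
  have hints' : ∀ a b : ℝ, IntervalIntegrable (fun t => Real.sin (t / R_a)) MeasureTheory.volume a b :=
    fun a b => (Real.continuous_sin.comp (continuous_id.div_const R_a)).intervalIntegrable a b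
  -- bounds for t in [0, l]
  have hbnd : ∀ t ∈ Set.Icc (0:ℝ) (R_a * Ω),
      0 ≤ θ t ∧ θ t ≤ maxCurv θ M * t ∧ t / R_a ≤ Ω ∧ 0 ≤ t / R_a := by
    intro t ht
    refine ⟨hθnn t (hIl ht), hθub t (hIl ht), ?_, div_nonneg ht.1 hRa.le⟩
    rw [div_le_iff₀ hRa]; linarith [ht.2]
  have hcosge : ∀ t ∈ Set.Icc (0:ℝ) (R_a * Ω), Real.cos (t / R_a) ≤ Real.cos (θ t) := by
    intro t ht
    obtain ⟨h1, h2, h3, h4⟩ := hbnd t ht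
    have hθt : θ t ≤ t / R_a := by
      have := mul_le_mul_of_nonneg_right he ht.1
      calc θ t ≤ maxCurv θ M * t := h2
        _ ≤ (1 / R_a) * t := this
        _ = t / R_a := by ring
    exact Real.cos_le_cos_of_nonneg_of_le_pi h1
      (h3.trans (le_of_lt (hΩπ.trans_le (by linarith [Real.pi_pos])))) hθt
  have hsinle : ∀ t ∈ Set.Icc (0:ℝ) (R_a * Ω), Real.sin (θ t) ≤ Real.sin (t / R_a) := by
    intro t ht
    obtain ⟨h1, h2, h3, h4⟩ := hbnd t ht
    have hθt : θ t ≤ t / R_a := by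
      have := mul_le_mul_of_nonneg_right he ht.1
      calc θ t ≤ maxCurv θ M * t := h2
        _ ≤ (1 / R_a) * t := this
        _ = t / R_a := by ring
    exact Real.sin_le_sin_of_le_of_le_pi_div_two (by linarith [Real.pi_pos])
      (by linarith) hθt
  -- strict versions
  have hstrict : maxCurv θ M < 1 / R_a → ∀ t, 0 < t → t ≤ R_a * Ω →
      Real.cos (t / R_a) < Real.cos (θ t) ∧ Real.sin (θ t) < Real.sin (t / R_a) := by
    intro he' t ht0 htl
    have ht : t ∈ Set.Icc (0:ℝ) (R_a * Ω) := ⟨ht0.le, htl⟩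
    obtain ⟨h1, h2, h3, h4⟩ := hbnd t ht
    have hθt : θ t < t / R_a := by
      have := mul_lt_mul_of_pos_right he' ht0
      calc θ t ≤ maxCurv θ M * t := h2
        _ < (1 / R_a) * t := this
        _ = t / R_a := by ring
    constructor
    · exact Real.cos_lt_cos_of_nonneg_of_le_pi h1
        (h3.trans (le_of_lt (hΩπ.trans_le (by linarith [Real.pi_pos])))) hθt
    · exact Real.sin_lt_sin_of_lt_of_le_pi_div_two (by linarith [Real.pi_pos])
        (by linarith) hθt
  -- key difference formulas
  have keyx : ∀ s₁ ∈ Set.Icc (0:ℝ) (R_a * Ω), ∀ s₂ ∈ Set.Icc (0:ℝ) (R_a * Ω),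
      (xcoord θ s₂ - R_a * Real.sin (s₂ / R_a)) - (xcoord θ s₁ - R_a * Real.sin (s₁ / R_a))
        = ∫ t in s₁..s₂, (Real.cos (θ t) - Real.cos (t / R_a)) := by
    intro s₁ hs₁ s₂ hs₂
    have h0M : (0:ℝ) ∈ Set.Icc (0:ℝ) M := ⟨le_rfl, hM.le⟩
    have h1 : xcoord θ s₂ - xcoord θ s₁ = ∫ t in s₁..s₂, Real.cos (θ t) :=
      intervalIntegral.integral_interval_sub_left (hintc 0 h0M s₂ (hIl hs₂)) (hintc 0 h0M s₁ (hIl hs₁))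
    have h2 : (∫ t in s₁..s₂, Real.cos (t / R_a))
        = R_a * (Real.sin (s₂ / R_a) - Real.sin (s₁ / R_a)) := by
      rw [intervalIntegral.integral_comp_div (f := Real.cos) hRa.ne', integral_cos, smul_eq_mul]
    rw [intervalIntegral.integral_sub (hintc s₁ (hIl hs₁) s₂ (hIl hs₂)) (hintc' s₁ s₂), h2, ← h1]
    ring
  have keyy : ∀ s₁ ∈ Set.Icc (0:ℝ) (R_a * Ω), ∀ s₂ ∈ Set.Icc (0:ℝ) (R_a * Ω),
      (ycoord θ s₂ - R_a * (1 - Real.cos (s₂ / R_a))) - (ycoord θ s₁ - R_a * (1 - Real.cos (s₁ / R_a)))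
        = ∫ t in s₁..s₂, (Real.sin (θ t) - Real.sin (t / R_a)) := by
    intro s₁ hs₁ s₂ hs₂
    have h0M : (0:ℝ) ∈ Set.Icc (0:ℝ) M := ⟨le_rfl, hM.le⟩
    have h1 : ycoord θ s₂ - ycoord θ s₁ = ∫ t in s₁..s₂, Real.sin (θ t) :=
      intervalIntegral.integral_interval_sub_left (hints 0 h0M s₂ (hIl hs₂)) (hints 0 h0M s₁ (hIl hs₁))
    have h2 : (∫ t in s₁..s₂, Real.sin (t / R_a))
        = R_a * (Real.cos (s₁ / R_a) - Real.cos (s₂ / R_a)) := by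
      rw [intervalIntegral.integral_comp_div (f := Real.sin) hRa.ne', integral_sin, smul_eq_mul]
    rw [intervalIntegral.integral_sub (hints s₁ (hIl hs₁) s₂ (hIl hs₂)) (hints' s₁ s₂), h2, ← h1]
    ring
  -- monotonicity
  have hmonoX : MonotoneOn (fun s => xcoord θ s - R_a * Real.sin (s / R_a))
      (Set.Icc 0 (R_a * Ω)) := by
    intro s₁ hs₁ s₂ hs₂ h12
    have hkey := keyx s₁ hs₁ s₂ hs₂
    have hpos : 0 ≤ ∫ t in s₁..s₂, (Real.cos (θ t) - Real.cos (t / R_a)) := by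
      apply intervalIntegral.integral_nonneg h12
      intro t ht
      have htl : t ∈ Set.Icc (0:ℝ) (R_a * Ω) := ⟨hs₁.1.trans ht.1, ht.2.trans hs₂.2⟩
      linarith [hcosge t htl]
    dsimp only
    linarith
  have hantiY : AntitoneOn (fun s => ycoord θ s - R_a * (1 - Real.cos (s / R_a)))
      (Set.Icc 0 (R_a * Ω)) := by
    intro s₁ hs₁ s₂ hs₂ h12
    have hkey := keyy s₁ hs₁ s₂ hs₂
    have hpos : 0 ≤ ∫ t in s₁..s₂, (Real.sin (t / R_a) - Real.sin (θ t)) := by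
      apply intervalIntegral.integral_nonneg h12
      intro t ht
      have htl : t ∈ Set.Icc (0:ℝ) (R_a * Ω) := ⟨hs₁.1.trans ht.1, ht.2.trans hs₂.2⟩
      linarith [hsinle t htl]
    have hneg : (∫ t in s₁..s₂, (Real.sin (θ t) - Real.sin (t / R_a)))
        = -∫ t in s₁..s₂, (Real.sin (t / R_a) - Real.sin (θ t)) := by
      rw [← intervalIntegral.integral_neg]; congr 1; ext t; ring
    dsimp only
    rw [hneg] at hkey
    linarith
  have hzeroX : xcoord θ 0 - R_a * Real.sin (0 / R_a) = 0 := by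
    simp [xcoord, intervalIntegral.integral_same]
  have hzeroY : ycoord θ 0 - R_a * (1 - Real.cos (0 / R_a)) = 0 := by
    simp [ycoord, intervalIntegral.integral_same]
  have h0mem : (0:ℝ) ∈ Set.Icc (0:ℝ) (R_a * Ω) :=
    ⟨le_rfl, mul_nonneg hRa.le hΩ0.le⟩
  refine ⟨hlM, hmonoX, hantiY, ?_, ?_⟩
  · intro s hs
    have h1 := hmonoX h0mem hs hs.1
    have h2 := hantiY h0mem hs hs.1
    dsimp only at h1 h2
    rw [hzeroX] at h1
    rw [hzeroY] at h2
    exact ⟨by linarith, by linarith⟩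
  · intro he'
    have hstrX : StrictMonoOn (fun s => xcoord θ s - R_a * Real.sin (s / R_a))
        (Set.Icc 0 (R_a * Ω)) := by
      intro s₁ hs₁ s₂ hs₂ h12
      have hkey := keyx s₁ hs₁ s₂ hs₂
      have hpos : 0 < ∫ t in s₁..s₂, (Real.cos (θ t) - Real.cos (t / R_a)) := by
        apply intervalIntegral.intervalIntegral_pos_of_pos_on
        · exact (hintc s₁ (hIl hs₁) s₂ (hIl hs₂)).sub (hintc' s₁ s₂)
        · intro t ht
          have ht0 : 0 < t := lt_of_le_of_lt hs₁.1 ht.1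
          have htl : t ≤ R_a * Ω := ht.2.le.trans hs₂.2
          linarith [(hstrict he' t ht0 htl).1]
        · exact h12
      dsimp only
      linarith
    have hstrY : StrictAntiOn (fun s => ycoord θ s - R_a * (1 - Real.cos (s / R_a)))
        (Set.Icc 0 (R_a * Ω)) := by
      intro s₁ hs₁ s₂ hs₂ h12
      have hkey := keyy s₁ hs₁ s₂ hs₂
      have hpos : 0 < ∫ t in s₁..s₂, (Real.sin (t / R_a) - Real.sin (θ t)) := by
        apply intervalIntegral.intervalIntegral_pos_of_pos_on
        · exact (hints' s₁ s₂).sub (hints s₁ (hIl hs₁) s₂ (hIl hs₂))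
        · intro t ht
          have ht0 : 0 < t := lt_of_le_of_lt hs₁.1 ht.1
          have htl : t ≤ R_a * Ω := ht.2.le.trans hs₂.2
          linarith [(hstrict he' t ht0 htl).2]
        · exact h12
      have hneg : (∫ t in s₁..s₂, (Real.sin (θ t) - Real.sin (t / R_a)))
          = -∫ t in s₁..s₂, (Real.sin (t / R_a) - Real.sin (θ t)) := by
        rw [← intervalIntegral.integral_neg]; congr 1; ext t; ring
      dsimp only
      rw [hneg] at hkey
      linarith
    refine ⟨hstrX, hstrY, ?_⟩
    intro s hs
    have hsmem : s ∈ Set.Icc (0:ℝ) (R_a * Ω) := ⟨hs.1.le, hs.2⟩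
    have h1 := hstrX h0mem hsmem hs.1
    have h2 := hstrY h0mem hsmem hs.1
    dsimp only at h1 h2
    rw [hzeroX] at h1
    rw [hzeroY] at h2
    exact ⟨by linarith, by linarith⟩
end

section
/- Assume Ω ∈ (0, π/2). Let (M, θ) be an admissible curve with plane curve Z = (x̂, ŷ) and maximal curvature e ≤ 1/R_a (so M ≥ l). Then for every s ∈ (0, l], the normal component ζ(s) := −(x̂(s) − R_a sin(s/R_a))·sin(s/R_a) + (ŷ(s) − R_a (1 − cos(s/R_a)))·cos(s/R_a) satisfies ζ(s) ≤ 0; and if moreover e < 1/R_a, then ζ(s) < 0 for all s ∈ (0, l]. -/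
open Real

/-- If `Ω ∈ (0, π/2)` and the admissible curve `(M, θ)` has maximal curvature
`e ≤ 1/R_a`, then `M ≥ l = R_a Ω` and for every `s ∈ (0, l]` the normal component
`ζ(s) = −(x̂(s) − R_a sin(s/R_a)) sin(s/R_a) + (ŷ(s) − R_a (1 − cos(s/R_a))) cos(s/R_a)`
is `≤ 0`; and if `e < 1/R_a` then `ζ(s) < 0` on `(0, l]`. -/
theorem stmt10 (Ω R_a D b₁ b₂ M : ℝ) (θ : ℝ → ℝ)
    (hΩ : Ω ∈ Set.Ioo 0 (Real.pi / 2)) (hRa : 0 < R_a) (hD : 0 ≤ D)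
    (hb₁ : b₁ = R_a * Real.sin Ω + D * Real.cos Ω)
    (hb₂ : b₂ = R_a * (1 - Real.cos Ω) + D * Real.sin Ω)
    (h : Admissible Ω b₁ b₂ M θ)
    (he : maxCurv θ M ≤ 1 / R_a) :
    R_a * Ω ≤ M ∧
    (∀ s ∈ Set.Ioc (0:ℝ) (R_a * Ω),
      -(xcoord θ s - R_a * Real.sin (s / R_a)) * Real.sin (s / R_a)
        + (ycoord θ s - R_a * (1 - Real.cos (s / R_a))) * Real.cos (s / R_a) ≤ 0) ∧
    (maxCurv θ M < 1 / R_a →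
      ∀ s ∈ Set.Ioc (0:ℝ) (R_a * Ω),
        -(xcoord θ s - R_a * Real.sin (s / R_a)) * Real.sin (s / R_a)
          + (ycoord θ s - R_a * (1 - Real.cos (s / R_a))) * Real.cos (s / R_a) < 0) := by
  obtain ⟨hM, hmono, ⟨K₀, hK₀⟩, hθ0, hθM, hx, hy⟩ := h
  set e := maxCurv θ M with hedef
  have hSne : Set.Nonempty {K : ℝ | 0 ≤ K ∧ LipOn θ M K} := ⟨K₀, hK₀⟩
  have he0 : 0 ≤ e := le_csInf hSne fun K hK => hK.1
  have heLip : LipOn θ M e := by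
    intro s hs t ht
    rcases eq_or_ne s t with rfl | hst
    · simp
    · have h1 : 0 < |s - t| := abs_pos.mpr (sub_ne_zero.mpr hst)
      rw [← div_le_iff₀ h1]
      refine le_csInf hSne fun K hK => ?_
      rw [div_le_iff₀ h1]
      exact hK.2 s hs t ht
  have h0M : (0:ℝ) ∈ Set.Icc (0:ℝ) M := Set.left_mem_Icc.mpr hM.le
  have hθnn : ∀ t ∈ Set.Icc (0:ℝ) M, 0 ≤ θ t := fun t ht =>
    hθ0 ▸ hmono h0M ht ht.1
  have hθle : ∀ t ∈ Set.Icc (0:ℝ) M, θ t ≤ e * t := by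
    intro t ht
    have h2 := heLip t ht 0 h0M
    rw [hθ0, sub_zero, sub_zero, abs_of_nonneg ht.1] at h2
    exact (le_abs_self _).trans h2
  have hlM : R_a * Ω ≤ M := by
    have h1 : θ M ≤ e * M := hθle M (Set.right_mem_Icc.mpr hM.le)
    rw [hθM] at h1
    have h2 : e * M ≤ (1 / R_a) * M := mul_le_mul_of_nonneg_right he hM.le
    have h4 : R_a * Ω ≤ R_a * ((1 / R_a) * M) :=
      mul_le_mul_of_nonneg_left (h1.trans h2) hRa.le
    rwa [show R_a * ((1 / R_a) * M) = M by field_simp] at h4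
  have hcont : ContinuousOn θ (Set.Icc 0 M) := by
    have : LipschitzOnWith e.toNNReal θ (Set.Icc 0 M) := by
      apply LipschitzOnWith.of_dist_le_mul
      intro a ha b hb
      rw [Real.dist_eq, Real.dist_eq, Real.coe_toNNReal e he0]
      exact heLip a ha b hb
    exact this.continuousOn
  -- key identity and pointwise estimates
  have hkey : ∀ s ∈ Set.Ioc (0:ℝ) (R_a * Ω),
      -(xcoord θ s - R_a * Real.sin (s / R_a)) * Real.sin (s / R_a)
        + (ycoord θ s - R_a * (1 - Real.cos (s / R_a))) * Real.cos (s / R_a)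
      = ∫ t in (0:ℝ)..s, (Real.sin (θ t - s / R_a) + Real.sin ((s - t) / R_a)) := by
    intro s hs
    have hs0 : 0 < s := hs.1
    have hsM : s ≤ M := hs.2.trans hlM
    have hcs : ContinuousOn θ (Set.uIcc 0 s) := by
      rw [Set.uIcc_of_le hs0.le]
      exact hcont.mono (Set.Icc_subset_Icc le_rfl hsM)
    have hIc : IntervalIntegrable (fun t => Real.cos (θ t)) MeasureTheory.volume 0 s :=
      (Real.continuous_cos.comp_continuousOn hcs).intervalIntegrable
    have hIs : IntervalIntegrable (fun t => Real.sin (θ t)) MeasureTheory.volume 0 s :=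
      (Real.continuous_sin.comp_continuousOn hcs).intervalIntegrable
    have hI1 : IntervalIntegrable (fun t => Real.sin (θ t - s / R_a))
        MeasureTheory.volume 0 s :=
      (Real.continuous_sin.comp_continuousOn (hcs.sub continuousOn_const)).intervalIntegrable
    have hI2 : IntervalIntegrable (fun t => Real.sin ((s - t) / R_a))
        MeasureTheory.volume 0 s := (by fun_prop : Continuous fun t : ℝ => Real.sin ((s - t) / R_a)).intervalIntegrable _ _
    have h1 : (∫ t in (0:ℝ)..s, Real.sin (θ t - s / R_a))
        = Real.cos (s / R_a) * ycoord θ s - Real.sin (s / R_a) * xcoord θ s := by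
      rw [xcoord, ycoord, ← intervalIntegral.integral_const_mul,
        ← intervalIntegral.integral_const_mul,
        ← intervalIntegral.integral_sub (hIs.const_mul _) (hIc.const_mul _)]
      refine intervalIntegral.integral_congr fun t _ => ?_
      rw [Real.sin_sub]; ring
    have h2 : (∫ t in (0:ℝ)..s, Real.sin ((s - t) / R_a))
        = R_a * (1 - Real.cos (s / R_a)) := by
      have h3 := intervalIntegral.integral_comp_sub_left
        (a := (0:ℝ)) (b := s) (fun x => Real.sin (x / R_a)) s
      simp only [sub_self, sub_zero] at h3
      rw [h3, intervalIntegral.integral_comp_div (fun x => Real.sin x) hRa.ne',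
        integral_sin, zero_div]
      simp [mul_sub]
    rw [intervalIntegral.integral_add hI1 hI2, h1, h2]
    linear_combination R_a * Real.sin_sq_add_cos_sq (s / R_a)
  have hub : ∀ s ∈ Set.Ioc (0:ℝ) (R_a * Ω), ∀ t ∈ Set.Icc (0:ℝ) s,
      -(Real.pi/2) ≤ θ t - s / R_a ∧ θ t - s / R_a ≤ (t - s) / R_a ∧
      (t - s) / R_a ≤ Real.pi / 2 := by
    intro s hs t ht
    have hsM : s ≤ M := hs.2.trans hlM
    have htM : t ∈ Set.Icc (0:ℝ) M := ⟨ht.1, ht.2.trans hsM⟩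
    have h1 : θ t ≤ e * t := hθle t htM
    have h2 : e * t ≤ (1 / R_a) * t := mul_le_mul_of_nonneg_right he ht.1
    have h3 : 0 ≤ θ t := hθnn t htM
    have hsR : s / R_a ≤ Ω := by
      rw [div_le_iff₀ hRa]; linarith [hs.2]
    have hts : (t - s) / R_a ≤ 0 := div_nonpos_of_nonpos_of_nonneg (by linarith [ht.2]) hRa.le
    refine ⟨by nlinarith [hΩ.2, Real.pi_pos], ?_, by nlinarith [Real.pi_pos]⟩
    have : (1 / R_a) * t = t / R_a := by ring
    rw [sub_div]
    linarith [h1.trans (h2.trans_eq this)]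
  refine ⟨hlM, ?_, ?_⟩
  · intro s hs
    rw [hkey s hs]
    have hnn : (0:ℝ) ≤ ∫ t in (0:ℝ)..s,
        -(Real.sin (θ t - s / R_a) + Real.sin ((s - t) / R_a)) := by
      apply intervalIntegral.integral_nonneg hs.1.le
      intro t ht
      obtain ⟨ha, hb, hc⟩ := hub s hs t ht
      have h4 : Real.sin (θ t - s / R_a) ≤ Real.sin ((t - s) / R_a) :=
        Real.sin_le_sin_of_le_of_le_pi_div_two ha hc hb
      have h5 : Real.sin ((s - t) / R_a) = -Real.sin ((t - s) / R_a) := by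
        rw [show (s - t) / R_a = -((t - s) / R_a) by ring, Real.sin_neg]
      show (0:ℝ) ≤ -(Real.sin (θ t - s / R_a) + Real.sin ((s - t) / R_a))
      rw [h5]; linarith
    rw [intervalIntegral.integral_neg] at hnn
    linarith
  · intro hlt s hs
    rw [hkey s hs]
    have hs0 : 0 < s := hs.1
    have hsM : s ≤ M := hs.2.trans hlM
    have hcs : ContinuousOn θ (Set.uIcc 0 s) := by
      rw [Set.uIcc_of_le hs0.le]
      exact hcont.mono (Set.Icc_subset_Icc le_rfl hsM)
    have hIg : IntervalIntegrable
        (fun t => -(Real.sin (θ t - s / R_a) + Real.sin ((s - t) / R_a)))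
        MeasureTheory.volume 0 s := by
      apply ContinuousOn.intervalIntegrable
      apply ContinuousOn.neg
      exact (Real.continuous_sin.comp_continuousOn (hcs.sub continuousOn_const)).add
        (Continuous.continuousOn (by fun_prop))
    have hpos : (0:ℝ) < ∫ t in (0:ℝ)..s,
        -(Real.sin (θ t - s / R_a) + Real.sin ((s - t) / R_a)) := by
      apply intervalIntegral.intervalIntegral_pos_of_pos_on hIg _ hs0
      intro t ht
      obtain ⟨ha, hb, hc⟩ := hub s hs t ⟨ht.1.le, ht.2.le⟩
      have htM : t ∈ Set.Icc (0:ℝ) M := ⟨ht.1.le, ht.2.le.trans hsM⟩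
      have h1 : θ t ≤ e * t := hθle t htM
      have h2 : e * t < (1 / R_a) * t := mul_lt_mul_of_pos_right hlt ht.1
      have hb' : θ t - s / R_a < (t - s) / R_a := by
        rw [sub_div]
        have h3 : (1 / R_a) * t = t / R_a := by ring
        linarith [h1.trans_lt (h2.trans_eq h3)]
      have h4 : Real.sin (θ t - s / R_a) < Real.sin ((t - s) / R_a) :=
        Real.sin_lt_sin_of_lt_of_le_pi_div_two ha hc hb'
      have h5 : Real.sin ((s - t) / R_a) = -Real.sin ((t - s) / R_a) := by
        rw [show (s - t) / R_a = -((t - s) / R_a) by ring, Real.sin_neg]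
      show (0:ℝ) < -(Real.sin (θ t - s / R_a) + Real.sin ((s - t) / R_a))
      rw [h5]; linarith
    rw [intervalIntegral.integral_neg] at hpos
    linarith
end

section
/- Let Ω ∈ [π/2, π), R_a > 0, R₁ > 0, R₂ > 0, d₁ ≥ 0, d₂ ≥ 0 and D ∈ ℝ. Define x̃ = d₁ + R₁ sin(Ω/2) + d₂ cos(Ω/2) + R₂ (sin Ω − sin(Ω/2)), ỹ = R₁ (1 − cos(Ω/2)) + d₂ sin(Ω/2) − R₂ (cos Ω − cos(Ω/2)), b₁ = R_a sin Ω + D cos Ω, b₂ = R_a (1 − cos Ω) + D sin Ω, and ζ₀ = −(x̃ − b₁) sin Ω + (ỹ − b₂) cos Ω. Then ζ₀ = (cos Ω − cos(Ω/2))·(R₁ − R_a) + (cos(Ω/2) − 1)·(R₂ − R_a) − sin(Ω)·d₁ − sin(Ω/2)·d₂, and the four coefficients cos Ω − cos(Ω/2), cos(Ω/2) − 1, −sin Ω and −sin(Ω/2) are all strictly negative. Consequently: if R₁ ≥ R_a and R₂ ≥ R_a then ζ₀ ≤ 0; if R₁ > R_a and R₂ > R_a then ζ₀ < 0; and if R₁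 ≥ R_a, R₂ ≥ R_a and ζ₀ = 0 then R₁ = R₂ = R_a and d₁ = d₂ = 0. -/
open Real

/-- Algebraic identity and sign analysis for the normal component `ζ₀` of the endpoint
of a segment–arc–segment–arc concatenation relative to the endpoint of the
arc-then-segment curve. -/
theorem stmt11 (Ω R_a R₁ R₂ d₁ d₂ D xt yt b₁ b₂ ζ₀ : ℝ)
    (hΩ : Ω ∈ Set.Ico (Real.pi / 2) Real.pi)
    (hRa : 0 < R_a) (hR₁ : 0 < R₁) (hR₂ : 0 < R₂) (hd₁ : 0 ≤ d₁) (hd₂ : 0 ≤ d₂)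
    (hxt : xt = d₁ + R₁ * Real.sin (Ω / 2) + d₂ * Real.cos (Ω / 2)
      + R₂ * (Real.sin Ω - Real.sin (Ω / 2)))
    (hyt : yt = R₁ * (1 - Real.cos (Ω / 2)) + d₂ * Real.sin (Ω / 2)
      - R₂ * (Real.cos Ω - Real.cos (Ω / 2)))
    (hb₁ : b₁ = R_a * Real.sin Ω + D * Real.cos Ω)
    (hb₂ : b₂ = R_a * (1 - Real.cos Ω) + D * Real.sin Ω)
    (hζ : ζ₀ = -(xt - b₁) * Real.sin Ω + (yt - b₂) * Real.cos Ω) :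
    ζ₀ = (Real.cos Ω - Real.cos (Ω / 2)) * (R₁ - R_a)
        + (Real.cos (Ω / 2) - 1) * (R₂ - R_a)
        - Real.sin Ω * d₁ - Real.sin (Ω / 2) * d₂ ∧
    Real.cos Ω - Real.cos (Ω / 2) < 0 ∧
    Real.cos (Ω / 2) - 1 < 0 ∧
    -Real.sin Ω < 0 ∧
    -Real.sin (Ω / 2) < 0 ∧
    (R_a ≤ R₁ → R_a ≤ R₂ → ζ₀ ≤ 0) ∧
    (R_a < R₁ → R_a < R₂ → ζ₀ < 0) ∧
    (R_a ≤ R₁ → R_a ≤ R₂ → ζ₀ = 0 → R₁ = R_a ∧ R₂ = R_a ∧ d₁ = 0 ∧ d₂ = 0) := by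
  obtain ⟨hΩ1, hΩ2⟩ := hΩ
  have hπ := Real.pi_pos
  have hΩpos : 0 < Ω := lt_of_lt_of_le (by linarith) hΩ1
  have hhalf1 : 0 < Ω / 2 := by linarith
  have hhalf2 : Ω / 2 < Real.pi / 2 := by linarith
  have hs2 : 0 < Real.sin (Ω / 2) := Real.sin_pos_of_pos_of_lt_pi hhalf1 (by linarith)
  have hc2 : 0 < Real.cos (Ω / 2) := Real.cos_pos_of_mem_Ioo ⟨by linarith, hhalf2⟩
  have hsΩ : 0 < Real.sin Ω := Real.sin_pos_of_pos_of_lt_pi hΩpos hΩ2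
  have hcΩ : Real.cos Ω ≤ 0 := Real.cos_nonpos_of_pi_div_two_le_of_le hΩ1 (by linarith)
  have pyth := Real.sin_sq_add_cos_sq (Ω / 2)
  have hc2lt1 : Real.cos (Ω / 2) < 1 := by nlinarith
  -- double angle
  have h2 : 2 * (Ω / 2) = Ω := by ring
  have hsin : Real.sin Ω = 2 * Real.sin (Ω / 2) * Real.cos (Ω / 2) := by
    have h := Real.sin_two_mul (Ω / 2); rw [h2] at h; exact h
  have hcos : Real.cos Ω = 1 - 2 * Real.sin (Ω / 2) ^ 2 := by
    have h := Real.cos_two_mul (Ω / 2); rw [h2] at h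
    rw [h]; linear_combination 2 * pyth
  have hid : ζ₀ = (Real.cos Ω - Real.cos (Ω / 2)) * (R₁ - R_a)
        + (Real.cos (Ω / 2) - 1) * (R₂ - R_a)
        - Real.sin Ω * d₁ - Real.sin (Ω / 2) * d₂ := by
    subst hζ hxt hyt hb₁ hb₂
    rw [hsin, hcos]
    linear_combination (-2 * Real.sin (Ω / 2) * d₂ - 4 * Real.sin (Ω / 2) ^ 2 * R₂
      + 4 * Real.sin (Ω / 2) ^ 2 * R_a) * pyth
  have hA : Real.cos Ω - Real.cos (Ω / 2) < 0 := by linarith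
  have hB : Real.cos (Ω / 2) - 1 < 0 := by linarith
  refine ⟨hid, hA, hB, by linarith, by linarith, ?_, ?_, ?_⟩
  · intro h1 h2
    linarith [mul_nonneg hsΩ.le hd₁, mul_nonneg hs2.le hd₂,
      mul_nonpos_of_nonpos_of_nonneg hA.le (by linarith : (0:ℝ) ≤ R₁ - R_a),
      mul_nonpos_of_nonpos_of_nonneg hB.le (by linarith : (0:ℝ) ≤ R₂ - R_a)]
  · intro h1 h2
    linarith [mul_nonneg hsΩ.le hd₁, mul_nonneg hs2.le hd₂,
      mul_neg_of_neg_of_pos hA (by linarith : (0:ℝ) < R₁ - R_a),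
      mul_neg_of_neg_of_pos hB (by linarith : (0:ℝ) < R₂ - R_a)]
  · intro h1 h2 h0
    have t1 : (Real.cos Ω - Real.cos (Ω / 2)) * (R₁ - R_a) ≤ 0 :=
      mul_nonpos_of_nonpos_of_nonneg hA.le (by linarith)
    have t2 : (Real.cos (Ω / 2) - 1) * (R₂ - R_a) ≤ 0 :=
      mul_nonpos_of_nonpos_of_nonneg hB.le (by linarith)
    have t3 : 0 ≤ Real.sin Ω * d₁ := mul_nonneg hsΩ.le hd₁
    have t4 : 0 ≤ Real.sin (Ω / 2) * d₂ := mul_nonneg hs2.le hd₂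
    have e1 : (Real.cos Ω - Real.cos (Ω / 2)) * (R₁ - R_a) = 0 := by linarith
    have e2 : (Real.cos (Ω / 2) - 1) * (R₂ - R_a) = 0 := by linarith
    have e3 : Real.sin Ω * d₁ = 0 := by linarith
    have e4 : Real.sin (Ω / 2) * d₂ = 0 := by linarith
    refine ⟨?_, ?_, ?_, ?_⟩
    · have := (mul_eq_zero.1 e1).resolve_left hA.ne
      linarith
    · have := (mul_eq_zero.1 e2).resolve_left hB.ne
      linarith
    · exact (mul_eq_zero.1 e3).resolve_left hsΩ.ne'
    · exact (mul_eq_zero.1 e4).resolve_left hs2.ne'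
end

section
/- Suppose R ≥ R_a, d₁ ≥ 0 and d₃ ≥ 0 are such that the pair (L, φ) with L = d₁ + R·Ω + d₃ and φ(s) = min(max((s − d₁)/R, 0), Ω) (the concatenation of a line segment of length d₁, a circular arc of radius R and angle Ω, and a line segment of length d₃) is admissible. Then R = R_a, d₁ = 0 and d₃ = D; that is, the only admissible concatenation of two line segments and one circular arc of radius at least R_a is the arc-then-segment curve (L₀, φ₀). -/
/-!
Integrating `cos` and `sin` along the segment–arc–segment curve gives its endpoint
`(d₁ + R sin Ω + d₃ cos Ω, R (1 - cos Ω) + d₃ sin Ω)`. The linear functional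
`(x, y) ↦ x sin Ω - y cos Ω` kills the direction `β` of the final segment and sends this endpoint
to `d₁ sin Ω + R (1 - cos Ω)`, and the endpoint `B` of the arc-then-segment curve to
`R_a (1 - cos Ω)`. Both summands of `d₁ sin Ω + (R - R_a) (1 - cos Ω) = 0` are nonnegative,
so `d₁ = 0` and `R = R_a`; the second coordinate then gives `d₃ = D`.
-/

open Real

open intervalIntegral MeasureTheory

/-- The tangent angle of the curve made of a segment of length `d₁`, an arc of radius `R` and
angle `Ω`, and a final segment. -/
noncomputable def segArcSegAngle (d₁ R Ω s : ℝ) : ℝ := min (max ((s - d₁) / R) 0) Ω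

section segArcSegAngle

variable {d₁ R Ω s : ℝ}

lemma segArcSegAngle_of_le (hR : 0 ≤ R) (hΩ : 0 ≤ Ω) (hs : s ≤ d₁) :
    segArcSegAngle d₁ R Ω s = 0 := by
  rw [segArcSegAngle, max_eq_right (div_nonpos_of_nonpos_of_nonneg (by linarith) hR),
    min_eq_left hΩ]

lemma segArcSegAngle_of_mem_Icc (hR : 0 < R) (hs : s ∈ Set.Icc d₁ (d₁ + R * Ω)) :
    segArcSegAngle d₁ R Ω s = (s - d₁) / R := by
  have h₀ : 0 ≤ (s - d₁) / R := div_nonneg (by linarith [hs.1]) hR.le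
  have hΩ : (s - d₁) / R ≤ Ω := (div_le_iff₀ hR).2 (by linarith [hs.2])
  rw [segArcSegAngle, max_eq_left h₀, min_eq_left hΩ]

lemma segArcSegAngle_of_ge (hR : 0 < R) (hs : d₁ + R * Ω ≤ s) :
    segArcSegAngle d₁ R Ω s = Ω := by
  have hΩ : Ω ≤ (s - d₁) / R := (le_div_iff₀ hR).2 (by linarith)
  rw [segArcSegAngle, min_eq_right (hΩ.trans (le_max_left _ _))]

lemma continuous_segArcSegAngle : Continuous (segArcSegAngle d₁ R Ω) := by
  unfold segArcSegAngle
  fun_prop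

theorem integral_comp_segArcSegAngle {g : ℝ → ℝ} (hg : Continuous g) (hR : 0 < R)
    (hΩ : 0 ≤ Ω) (hd₁ : 0 ≤ d₁) {d₃ : ℝ} (hd₃ : 0 ≤ d₃) :
    ∫ s in (0 : ℝ)..d₁ + R * Ω + d₃, g (segArcSegAngle d₁ R Ω s)
      = d₁ * g 0 + R * (∫ u in (0 : ℝ)..Ω, g u) + d₃ * g Ω := by
  have hint (a b : ℝ) : IntervalIntegrable (fun s ↦ g (segArcSegAngle d₁ R Ω s)) volume a b :=
    (hg.comp continuous_segArcSegAngle).intervalIntegrable a b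
  have hRΩ : 0 ≤ R * Ω := mul_nonneg hR.le hΩ
  have hfirst : ∫ s in (0 : ℝ)..d₁, g (segArcSegAngle d₁ R Ω s) = d₁ * g 0 := by
    rw [integral_congr (g := fun _ ↦ g 0), intervalIntegral.integral_const, smul_eq_mul, sub_zero]
    intro s hs
    rw [Set.uIcc_of_le hd₁] at hs
    simp only [segArcSegAngle_of_le hR.le hΩ hs.2]
  have harc : ∫ s in d₁..d₁ + R * Ω, g (segArcSegAngle d₁ R Ω s)
      = R * ∫ u in (0 : ℝ)..Ω, g u := by
    rw [integral_congr (g := fun s ↦ g ((s - d₁) / R)),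
      integral_comp_sub_right (fun x ↦ g (x / R)), integral_comp_div _ hR.ne', smul_eq_mul]
    · simp [hR.ne']
    intro s hs
    rw [Set.uIcc_of_le (by linarith)] at hs
    simp only [segArcSegAngle_of_mem_Icc hR hs]
  have hlast : ∫ s in d₁ + R * Ω..d₁ + R * Ω + d₃, g (segArcSegAngle d₁ R Ω s) = d₃ * g Ω := by
    rw [integral_congr (g := fun _ ↦ g Ω), intervalIntegral.integral_const, smul_eq_mul,
      add_sub_cancel_left]
    intro s hs
    rw [Set.uIcc_of_le (by linarith)] at hs
    simp only [segArcSegAngle_of_ge hR hs.1]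
  rw [← integral_add_adjacent_intervals (hint _ _) (hint (d₁ + R * Ω) _),
    ← integral_add_adjacent_intervals (hint _ _) (hint d₁ _), hfirst, harc, hlast]

end segArcSegAngle

theorem segArcSeg_params_eq_of_endpoint_eq {Ω R_a D R d₁ d₃ : ℝ} (hΩ : Ω ∈ Set.Ioo 0 π)
    (hR : R_a ≤ R) (hd₁ : 0 ≤ d₁)
    (hx : d₁ + R * sin Ω + d₃ * cos Ω = R_a * sin Ω + D * cos Ω)
    (hy : R * (1 - cos Ω) + d₃ * sin Ω = R_a * (1 - cos Ω) + D * sin Ω) :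
    R = R_a ∧ d₁ = 0 ∧ d₃ = D := by
  have hsin : 0 < sin Ω := sin_pos_of_pos_of_lt_pi hΩ.1 hΩ.2
  have hcos : cos Ω < 1 := by nlinarith [sin_sq_add_cos_sq Ω]
  have hkey : d₁ * sin Ω + (R - R_a) * (1 - cos Ω) = 0 := by
    linear_combination sin Ω * hx - cos Ω * hy - (R - R_a) * sin_sq_add_cos_sq Ω
  have h₁ : 0 ≤ d₁ * sin Ω := mul_nonneg hd₁ hsin.le
  have h₂ : 0 ≤ (R - R_a) * (1 - cos Ω) := mul_nonneg (by linarith) (by linarith)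
  have hRR : R = R_a := by nlinarith
  refine ⟨hRR, by nlinarith, mul_right_cancel₀ hsin.ne' ?_⟩
  subst hRR
  linarith

theorem stmt12_general (Ω R_a D b₁ b₂ R d₁ d₃ : ℝ)
    (hΩ : Ω ∈ Set.Ioo 0 Real.pi) (hRa : 0 < R_a)
    (hb₁ : b₁ = R_a * Real.sin Ω + D * Real.cos Ω)
    (hb₂ : b₂ = R_a * (1 - Real.cos Ω) + D * Real.sin Ω)
    (hR : R_a ≤ R) (hd₁ : 0 ≤ d₁) (hd₃ : 0 ≤ d₃)
    (h : Admissible Ω b₁ b₂ (d₁ + R * Ω + d₃)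
      (fun s => min (max ((s - d₁) / R) 0) Ω)) :
    R = R_a ∧ d₁ = 0 ∧ d₃ = D := by
  have hRpos : 0 < R := hRa.trans_le hR
  obtain ⟨-, -, -, -, -, hx, hy⟩ : Admissible Ω b₁ b₂ _ (segArcSegAngle d₁ R Ω) := h
  rw [integral_comp_segArcSegAngle continuous_cos hRpos hΩ.1.le hd₁ hd₃, integral_cos] at hx
  rw [integral_comp_segArcSegAngle continuous_sin hRpos hΩ.1.le hd₁ hd₃, integral_sin] at hy
  simp only [cos_zero, sin_zero, mul_one, mul_zero, sub_zero, zero_add] at hx hy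
  exact segArcSeg_params_eq_of_endpoint_eq hΩ hR hd₁ (by linarith) (by linarith)

/-- The only admissible concatenation segment–arc–segment with arc radius `R ≥ R_a`
is the arc-then-segment curve itself: `R = R_a`, `d₁ = 0` and `d₃ = D`. -/
theorem stmt12 (Ω R_a D b₁ b₂ R d₁ d₃ : ℝ)
    (hΩ : Ω ∈ Set.Ioo 0 Real.pi) (hRa : 0 < R_a) (hD : 0 ≤ D)
    (hb₁ : b₁ = R_a * Real.sin Ω + D * Real.cos Ω)
    (hb₂ : b₂ = R_a * (1 - Real.cos Ω) + D * Real.sin Ω)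
    (hR : R_a ≤ R) (hd₁ : 0 ≤ d₁) (hd₃ : 0 ≤ d₃)
    (h : Admissible Ω b₁ b₂ (d₁ + R * Ω + d₃)
      (fun s => min (max ((s - d₁) / R) 0) Ω)) :
    R = R_a ∧ d₁ = 0 ∧ d₃ = D :=
  stmt12_general Ω R_a D b₁ b₂ R d₁ d₃ hΩ hRa hb₁ hb₂ hR hd₁ hd₃ h
end
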